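/- arXiv:2009.07229 — 6 statements merged into one kernel-verified Lean document; each statement's English description precedes it below -/
import Mathlib

section
/- Let H be a complex Hilbert space and n, c ≥ 1 integers. Suppose q_{a,ij} ∈ B(H) for 1 ≤ a ≤ c and 1 ≤ i,j ≤ n are such that each matrix Q_a = (q_{a,ij}) acts as a positive operator on the ℓ²-direct sum H^n (via (Q_a ξ)_i = Σ_j q_{a,ij} ξ_j) and Σ_{a=1}^c Q_a is the identity on H^n. Then there exist operators p_{a,ij} ∈ B(H^{(c+1)}) (where H^{(c+1)} is the ℓ²-direct sum of c+1 copies of H) such that each matrix P_a = (p_{a,ij}) is a self-adjoint idempotent operator on (H^{(c+1)})^n, Σ_{a=1}^c P_a is the identity on (H^{(c+1)})^n, and V* p_{a,ij} V = q_{a,ij} for all a, i, j, where V : H → H^{(c+1)} is the isometric embedding onto the first direct summand. -/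
open scoped ENNReal

set_option synthInstance.maxHeartbeats 1000000
set_option maxHeartbeats 1000000

noncomputable section

instance piLpCompleteSpace {ι : Type*} (p : ℝ≥0∞) (β : ι → Type*)
    [∀ i, UniformSpace (β i)] [∀ i, CompleteSpace (β i)] : CompleteSpace (PiLp p β) :=
  (PiLp.uniformEquiv p β).completeSpace_iff.2 inferInstance

/-- The isometric embedding of `E` onto the `i`-th coordinate of the
ℓ²-direct sum of `n` copies of `E`. -/
def inclPi (E : Type*) [NormedAddCommGroup E] [InnerProductSpace ℂ E]
    (n : ℕ) (i : Fin n) : E →L[ℂ] PiLp 2 (fun _ : Fin n => E) :=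
  (PiLp.continuousLinearEquiv 2 ℂ (fun _ : Fin n => E)).symm.toContinuousLinearMap.comp
    (ContinuousLinearMap.pi fun j => if j = i then ContinuousLinearMap.id ℂ E else 0)

/-- The continuous linear projection onto the `i`-th coordinate of the
ℓ²-direct sum of `n` copies of `E`. -/
def projPi (E : Type*) [NormedAddCommGroup E] [InnerProductSpace ℂ E]
    (n : ℕ) (i : Fin n) : PiLp 2 (fun _ : Fin n => E) →L[ℂ] E :=
  (ContinuousLinearMap.proj i).comp
    (PiLp.continuousLinearEquiv 2 ℂ (fun _ : Fin n => E)).toContinuousLinearMap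

/-- The operator on the ℓ²-direct sum `E^n` associated to an `n × n` matrix of bounded
operators on `E`, acting by `(T ξ) i = ∑ j, T i j (ξ j)`. -/
def matToOp {E : Type*} [NormedAddCommGroup E] [InnerProductSpace ℂ E] {n : ℕ}
    (T : Matrix (Fin n) (Fin n) (E →L[ℂ] E)) :
    PiLp 2 (fun _ : Fin n => E) →L[ℂ] PiLp 2 (fun _ : Fin n => E) :=
  ∑ i, ∑ j, (inclPi E n i).comp ((T i j).comp (projPi E n j))


/-!
Write `Q_a = b_aᴴ b_a` in the C⋆-algebra `B(Hⁿ) ≅ Mₙ(B(H))`, so that the column `V = (b_a)_a` is an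
isometry. Then `U = [[1 - V Vᴴ, V], [Vᴴ, 0]]` is a self-adjoint unitary in `M_{c+1}(Mₙ(B(H)))`, and
conjugating by `U` a diagonal PVM which gives the extra coordinate to some outcome yields a PVM whose
corner entries are `b_aᴴ b_a = Q_a`. Transposing the blocks,
`M_{c+1}(Mₙ(B(H))) ≅ Mₙ(M_{c+1}(B(H))) ≅ Mₙ(B(H^{c+1}))` is a unital ⋆-isomorphism, so it carries
this PVM to the required one.
-/

open Matrix

structure IsPVM {R ι : Type*} [Semiring R] [Star R] [Fintype ι] (P : ι → R) : Prop where
  isStarProjection : ∀ a, IsStarProjection (P a)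
  sum_eq_one : ∑ a, P a = 1

namespace IsPVM

variable {R ι : Type*} [Semiring R] [StarMul R] [Fintype ι] {P : ι → R}

lemma map {S F : Type*} [Semiring S] [Star S] [FunLike F R S] [RingHomClass F R S]
    [StarHomClass F R S] (hP : IsPVM P) (f : F) : IsPVM fun a => f (P a) where
  isStarProjection a := (hP.isStarProjection a).map f
  sum_eq_one := by rw [← map_sum, hP.sum_eq_one, map_one]

lemma conj {u : R} (hu : IsSelfAdjoint u) (huu : u * u = 1) (hP : IsPVM P) :
    IsPVM fun a => u * P a * u where
  isStarProjection a := by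
    obtain ⟨hidem, hsa⟩ := hP.isStarProjection a
    refine ⟨?_, ?_⟩
    · calc u * P a * u * (u * P a * u) = u * (P a * (u * u) * P a) * u := by simp only [mul_assoc]
        _ = u * P a * u := by rw [huu, mul_one, hidem.eq, mul_assoc]
    · simp only [IsSelfAdjoint, star_mul, hu.star_eq, hsa.star_eq, mul_assoc]
  sum_eq_one := by rw [← Finset.sum_mul, ← Finset.mul_sum, hP.sum_eq_one, mul_one, huu]

end IsPVM

def StarRingEquiv.mapMatrix {A B n : Type*} [NonAssocSemiring A] [Star A] [NonAssocSemiring B]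
    [Star B] [Fintype n] [DecidableEq n] (f : A ≃⋆+* B) : Matrix n n A ≃⋆+* Matrix n n B :=
  { (f : A ≃+* B).mapMatrix with
    map_star' _ := conjTranspose_map f fun a => map_star f a }

@[simp]
lemma StarRingEquiv.mapMatrix_apply {A B n : Type*} [NonAssocSemiring A] [Star A]
    [NonAssocSemiring B] [Star B] [Fintype n] [DecidableEq n] (f : A ≃⋆+* B) (M : Matrix n n A) :
    f.mapMatrix M = M.map f := rfl

namespace Matrix

section StarRingEquivs

variable {R : Type*} [NonUnitalNonAssocSemiring R] [Star R]

def reindexStarRingEquiv {m n : Type*} [Fintype m] [Fintype n] (e : m ≃ n) :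
    Matrix m m R ≃⋆+* Matrix n n R :=
  { reindexRingEquiv R e with map_star' := fun M => (conjTranspose_submatrix M _ _).symm }

def blockTransposeStarRingEquiv (I J : Type*) [Fintype I] [Fintype J] :
    Matrix I I (Matrix J J R) ≃⋆+* Matrix J J (Matrix I I R) where
  toFun M := of fun j j' => of fun i i' => M i i' j j'
  invFun M := of fun i i' => of fun j j' => M j j' i i'
  left_inv _ := rfl
  right_inv _ := rfl
  map_mul' A B := by
    ext
    simp only [of_apply, mul_apply, Matrix.sum_apply]
    exact Finset.sum_comm
  map_add' _ _ := rfl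
  map_star' _ := rfl

@[simp]
lemma blockTransposeStarRingEquiv_apply {I J : Type*} [Fintype I] [Fintype J]
    (M : Matrix I I (Matrix J J R)) (i i' : I) (j j' : J) :
    blockTransposeStarRingEquiv I J M j j' i i' = M i i' j j' := rfl

end StarRingEquivs

lemma isPVM_diagonal_indicator {R ι m : Type*} [Semiring R] [StarRing R] [Fintype ι]
    [DecidableEq ι] [Fintype m] [DecidableEq m] (r : ι → m) :
    IsPVM fun a : m => (diagonal fun x => if r x = a then 1 else 0 : Matrix ι ι R) where
  isStarProjection a := by
    refine ⟨?_, ?_⟩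
    · rw [IsIdempotentElem, diagonal_mul_diagonal]
      congr 1
      ext x
      split_ifs <;> simp
    · rw [IsSelfAdjoint, star_eq_conjTranspose, diagonal_conjTranspose]
      congr 1
      ext x
      by_cases h : r x = a <;> simp [h]
  sum_eq_one := by
    ext x y
    by_cases h : x = y <;> simp [Matrix.sum_apply, one_apply, h]

variable {R m k : Type*} [Ring R] [StarRing R] [DecidableEq m] [Fintype k]

def dilationReflection (V : Matrix m k R) : Matrix (m ⊕ k) (m ⊕ k) R :=
  fromBlocks (1 - V * Vᴴ) V Vᴴ 0

lemma isSelfAdjoint_dilationReflection (V : Matrix m k R) :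
    IsSelfAdjoint (dilationReflection V) := by
  simp [IsSelfAdjoint, dilationReflection, star_eq_conjTranspose, fromBlocks_conjTranspose,
    conjTranspose_mul]

lemma dilationReflection_mul_self [Fintype m] [DecidableEq k] {V : Matrix m k R}
    (hV : Vᴴ * V = 1) : dilationReflection V * dilationReflection V = 1 := by
  have h₁ : (1 - V * Vᴴ) * V = 0 := by
    rw [Matrix.sub_mul, Matrix.mul_assoc, hV, Matrix.one_mul, Matrix.mul_one, sub_self]
  have h₂ : Vᴴ * (1 - V * Vᴴ) = 0 := by
    rw [Matrix.mul_sub, ← Matrix.mul_assoc, hV, Matrix.one_mul, Matrix.mul_one, sub_self]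
  have h₃ : (1 - V * Vᴴ) * (1 - V * Vᴴ) + V * Vᴴ = 1 := by
    rw [Matrix.sub_mul, Matrix.one_mul, Matrix.mul_assoc, h₂, Matrix.mul_zero, sub_zero,
      sub_add_cancel]
  rw [dilationReflection, fromBlocks_multiply, h₁, h₂, h₃, hV]
  simp

theorem exists_isPVM_dilation [Fintype m] [Nonempty m] (b : m → R)
    (hb : ∑ a, star (b a) * b a = 1) :
    ∃ g : m → Matrix (m ⊕ Unit) (m ⊕ Unit) R,
      IsPVM g ∧ ∀ a, g a (.inr ()) (.inr ()) = star (b a) * b a := by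
  let V : Matrix m Unit R := of fun a _ => b a
  have hV : Vᴴ * V = 1 := by
    ext
    simpa [V, mul_apply] using hb
  -- The corner entry of the reflection vanishes, so the extra coordinate may go to any outcome.
  obtain ⟨r, hr⟩ : ∃ r : m ⊕ Unit → m, ∀ a, r (.inl a) = a :=
    ⟨Sum.elim id fun _ => Classical.arbitrary m, fun _ => rfl⟩
  refine ⟨fun a => dilationReflection V * diagonal (fun x => if r x = a then 1 else 0) *
      dilationReflection V, (isPVM_diagonal_indicator r).conj
      (isSelfAdjoint_dilationReflection V) (dilationReflection_mul_self hV), fun a => ?_⟩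
  simp [dilationReflection, V, hr, mul_apply, Fintype.sum_sum_type, diagonal_apply]

theorem exists_isPVM_dilation_fin {c : ℕ} (hc : 1 ≤ c) (b : Fin c → R)
    (hb : ∑ a, star (b a) * b a = 1) :
    ∃ g : Fin c → Matrix (Fin (c + 1)) (Fin (c + 1)) R,
      IsPVM g ∧ ∀ a, g a 0 0 = star (b a) * b a := by
  have : Nonempty (Fin c) := ⟨⟨0, hc⟩⟩
  obtain ⟨g, hg, hg_corner⟩ := exists_isPVM_dilation b hb
  let e : Fin c ⊕ Unit ≃ Fin (c + 1) :=
    ((finSuccEquiv c).trans (Equiv.optionEquivSumPUnit (Fin c))).symm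
  exact ⟨fun a => reindexStarRingEquiv e (g a), hg.map _, hg_corner⟩

end Matrix

section MatToOp

variable {E : Type*} [NormedAddCommGroup E] [InnerProductSpace ℂ E] {n : ℕ}

@[simp]
lemma inclPi_apply (i j : Fin n) (x : E) : inclPi E n i x j = if j = i then x else 0 := by
  show (if j = i then ContinuousLinearMap.id ℂ E else 0) x = _
  split <;> rfl

@[simp]
lemma projPi_apply (i : Fin n) (x : PiLp 2 (fun _ : Fin n => E)) : projPi E n i x = x i := rfl

lemma matToOp_apply (M : Matrix (Fin n) (Fin n) (E →L[ℂ] E)) (x : PiLp 2 (fun _ : Fin n => E))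
    (i : Fin n) : matToOp M x i = ∑ j, M i j (x j) := by
  simp [matToOp, WithLp.ofLp_sum]

lemma projPi_comp_matToOp_comp_inclPi (M : Matrix (Fin n) (Fin n) (E →L[ℂ] E)) (i j : Fin n) :
    (projPi E n i).comp ((matToOp M).comp (inclPi E n j)) = M i j := by
  ext x
  simp [matToOp_apply, apply_ite]

lemma matToOp_of_projPi_comp_inclPi
    (T : PiLp 2 (fun _ : Fin n => E) →L[ℂ] PiLp 2 (fun _ : Fin n => E)) :
    matToOp (.of fun i j => (projPi E n i).comp (T.comp (inclPi E n j))) = T := by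
  ext x i
  have hx : x = ∑ j, inclPi E n j (x j) := by ext; simp [WithLp.ofLp_sum]
  conv_rhs => rw [hx]
  simp [matToOp_apply, WithLp.ofLp_sum]

lemma matToOp_add (A B : Matrix (Fin n) (Fin n) (E →L[ℂ] E)) :
    matToOp (A + B) = matToOp A + matToOp B := by
  ext x i
  simp [matToOp_apply, Finset.sum_add_distrib]

lemma matToOp_mul (A B : Matrix (Fin n) (Fin n) (E →L[ℂ] E)) :
    matToOp (A * B) = matToOp A * matToOp B := by
  ext x i
  simp only [matToOp_apply, Matrix.mul_apply, _root_.sum_apply, mul_apply_eq_comp, map_sum]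
  exact Finset.sum_comm

variable [CompleteSpace E]

lemma matToOp_star (A : Matrix (Fin n) (Fin n) (E →L[ℂ] E)) :
    matToOp (star A) = star (matToOp A) := by
  rw [ContinuousLinearMap.star_eq_adjoint, ContinuousLinearMap.eq_adjoint_iff]
  intro x y
  simp only [PiLp.inner_apply, matToOp_apply, star_apply, ContinuousLinearMap.star_eq_adjoint,
    sum_inner, inner_sum, ContinuousLinearMap.adjoint_inner_left]
  exact Finset.sum_comm

variable (E n) in
def matToOpStarRingEquiv :
    Matrix (Fin n) (Fin n) (E →L[ℂ] E) ≃⋆+*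
      (PiLp 2 (fun _ : Fin n => E) →L[ℂ] PiLp 2 (fun _ : Fin n => E)) where
  toFun := matToOp
  invFun T := .of fun i j => (projPi E n i).comp (T.comp (inclPi E n j))
  left_inv M := by ext1 i j; exact projPi_comp_matToOp_comp_inclPi M i j
  right_inv := matToOp_of_projPi_comp_inclPi
  map_mul' := matToOp_mul
  map_add' := matToOp_add
  map_star' := matToOp_star

@[simp]
lemma coe_matToOpStarRingEquiv : ⇑(matToOpStarRingEquiv E n) = matToOp := rfl

lemma adjoint_inclPi (i : Fin n) : ContinuousLinearMap.adjoint (inclPi E n i) = projPi E n i := by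
  refine ((ContinuousLinearMap.eq_adjoint_iff (projPi E n i) _).2 fun x y => ?_).symm
  simp [PiLp.inner_apply, apply_ite]

lemma exists_eq_star_mul_self_of_isPositive_matToOp {Q : Matrix (Fin n) (Fin n) (E →L[ℂ] E)}
    (hQ : (matToOp Q).IsPositive) : ∃ b, Q = star b * b := by
  obtain ⟨s, hs⟩ := CStarAlgebra.nonneg_iff_eq_star_mul_self.1
    ((ContinuousLinearMap.nonneg_iff_isPositive _).2 hQ)
  refine ⟨(matToOpStarRingEquiv E n).symm s, EquivLike.injective (matToOpStarRingEquiv E n) ?_⟩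
  rw [map_mul, map_star, StarRingEquiv.apply_symm_apply, coe_matToOpStarRingEquiv, hs]

end MatToOp

theorem matrix_povm_dilates_to_matrix_pvm_general {H : Type*} [NormedAddCommGroup H]
    [InnerProductSpace ℂ H] [CompleteSpace H] (n c : ℕ) (hc : 1 ≤ c)
    (q : Fin c → Matrix (Fin n) (Fin n) (H →L[ℂ] H))
    (hqpos : ∀ a, (matToOp (q a)).IsPositive)
    (hqsum : ∑ a, matToOp (q a) = 1) :
    ∃ p : Fin c → Matrix (Fin n) (Fin n)
        (PiLp 2 (fun _ : Fin (c+1) => H) →L[ℂ] PiLp 2 (fun _ : Fin (c+1) => H)),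
      (∀ a, IsSelfAdjoint (matToOp (p a))) ∧
      (∀ a, (matToOp (p a)).comp (matToOp (p a)) = matToOp (p a)) ∧
      (∑ a, matToOp (p a) = 1) ∧
      (∀ a i j, (ContinuousLinearMap.adjoint (inclPi H (c+1) 0)).comp
          ((p a i j).comp (inclPi H (c+1) 0)) = q a i j) := by
  choose b hb using fun a => exists_eq_star_mul_self_of_isPositive_matToOp (hqpos a)
  have hbsum : ∑ a, star (b a) * b a = 1 := by
    refine EquivLike.injective (matToOpStarRingEquiv H n) ?_
    simpa only [map_sum, map_one, ← hb, coe_matToOpStarRingEquiv] using hqsum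
  obtain ⟨g, hg, hg_corner⟩ := exists_isPVM_dilation_fin hc b hbsum
  let Φ := (blockTransposeStarRingEquiv (Fin (c + 1)) (Fin n)).trans
    (matToOpStarRingEquiv H (c + 1)).mapMatrix
  have hP := hg.map (Φ.trans (matToOpStarRingEquiv _ n))
  refine ⟨fun a => Φ (g a), fun a => (hP.isStarProjection a).isSelfAdjoint,
    fun a => (hP.isStarProjection a).isIdempotentElem, hP.sum_eq_one, fun a i j => ?_⟩
  rw [adjoint_inclPi]
  simp only [Φ, StarRingEquiv.trans_apply, StarRingEquiv.mapMatrix_apply, map_apply,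
    coe_matToOpStarRingEquiv, projPi_comp_matToOp_comp_inclPi, blockTransposeStarRingEquiv_apply,
    hg_corner, hb]

/-- **Proposition (dilation of matrix-valued POVMs to matrix-valued PVMs).**  Let `q_{a,ij}`
(`1 ≤ a ≤ c`, `1 ≤ i,j ≤ n`) be operators on a complex Hilbert space `H` such that the matrices
`Q_a = (q_{a,ij})` form a POVM in `M_n(B(H))`.  Then there are operators `p_{a,ij}` on the
ℓ²-direct sum `H^{(c+1)}` such that the matrices `P_a = (p_{a,ij})` form a PVM in
`M_n(B(H^{(c+1)}))` and `V* p_{a,ij} V = q_{a,ij}` for all `a, i, j`, where `V` is the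
isometric embedding of `H` onto the first direct summand of `H^{(c+1)}`. -/
theorem matrix_povm_dilates_to_matrix_pvm {H : Type*} [NormedAddCommGroup H]
    [InnerProductSpace ℂ H] [CompleteSpace H] (n c : ℕ) (hn : 1 ≤ n) (hc : 1 ≤ c)
    (q : Fin c → Matrix (Fin n) (Fin n) (H →L[ℂ] H))
    (hqpos : ∀ a, (matToOp (q a)).IsPositive)
    (hqsum : ∑ a, matToOp (q a) = 1) :
    ∃ p : Fin c → Matrix (Fin n) (Fin n)
        (PiLp 2 (fun _ : Fin (c+1) => H) →L[ℂ] PiLp 2 (fun _ : Fin (c+1) => H)),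
      (∀ a, IsSelfAdjoint (matToOp (p a))) ∧
      (∀ a, (matToOp (p a)).comp (matToOp (p a)) = matToOp (p a)) ∧
      (∑ a, matToOp (p a) = 1) ∧
      (∀ a i j, (ContinuousLinearMap.adjoint (inclPi H (c+1) 0)).comp
          ((p a i j).comp (inclPi H (c+1) 0)) = q a i j) :=
  matrix_povm_dilates_to_matrix_pvm_general n c hc q hqpos hqsum
end
end

section
/- Let A be a unital C*-algebra, let τ be a tracial state on A, and let P_1, …, P_c be a PVM with c outputs in M_n(A) (each matrix P_a = (P_{a,ij}) satisfies P_a* = P_a, P_a² = P_a in M_n(A), and Σ_{a=1}^c P_a = I_n). Then the tuple X^{(a,b)}_{(i,j),(k,l)} = τ(P_{a,ij} (P_{b,kl})*) is synchronous: for all a ≠ b, Σ_{i,j=1}^n τ(P_{a,ij} (P_{b,ij})*) = 0, and moreover (1/n) Σ_{a=1}^c Σ_{i,j=1}^n τ(P_{a,ij} (P_{a,ij})*) = 1. -/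
/-! For star projections `p`, `q` and a positive tracial functional `φ`,
`φ (p q) = φ (p q p) = φ ((q p)⋆ (q p)) ≥ 0`. If the `p a` sum to `1`, then
`∑ b, φ (p a p b) = φ (p a) = φ (p a p a)`, so the nonnegative off-diagonal terms vanish.
On `M_n(A)` the functional `τ ∘ trace` is positive and tracial, and
`∑ i j, τ (P a i j * star (P b i j)) = τ (trace (P a * (P b)ᴴ))`; summing the diagonal terms
over `a` gives `τ (trace 1) = n`. -/

open Matrix
open scoped ComplexOrder

section TracialFunctional

variable {R B F : Type*} [FunLike F R B]

theorem sum_apply_mul_eq_apply [NonAssocSemiring R] [AddCommMonoid B] [AddMonoidHomClass F R B]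
    (φ : F) {ι : Type*} [Fintype ι] {p : ι → R} (hsum : ∑ b, p b = 1) (a : ι) :
    ∑ b, φ (p a * p b) = φ (p a) := by
  rw [← map_sum, ← Finset.mul_sum, hsum, mul_one]

variable [Ring R] [StarRing R] [AddCommGroup B] [PartialOrder B]

theorem apply_mul_nonneg_of_isStarProjection (φ : F) (hcomm : ∀ x y : R, φ (x * y) = φ (y * x))
    (hpos : ∀ x : R, 0 ≤ φ (star x * x)) {p q : R} (hp : IsStarProjection p)
    (hq : IsStarProjection q) : 0 ≤ φ (p * q) := by
  have hpqp : star (q * p) * (q * p) = p * q * p := by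
    rw [star_mul, hp.isSelfAdjoint.star_eq, hq.isSelfAdjoint.star_eq, mul_assoc,
      ← mul_assoc q, hq.isIdempotentElem.eq, mul_assoc]
  calc 0 ≤ φ (star (q * p) * (q * p)) := hpos _
    _ = φ (p * q) := by rw [hpqp, hcomm, ← mul_assoc, hp.isIdempotentElem.eq]

theorem apply_mul_eq_zero_of_sum_eq_one [IsOrderedAddMonoid B] [AddMonoidHomClass F R B]
    (φ : F) (hcomm : ∀ x y : R, φ (x * y) = φ (y * x)) (hpos : ∀ x : R, 0 ≤ φ (star x * x))
    {ι : Type*} [Fintype ι] [DecidableEq ι] {p : ι → R}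
    (hp : ∀ a, IsStarProjection (p a)) (hsum : ∑ b, p b = 1) {a b : ι} (hab : a ≠ b) :
    φ (p a * p b) = 0 := by
  have hrest : ∑ b ∈ Finset.univ.erase a, φ (p a * p b) = 0 := by
    have h := sum_apply_mul_eq_apply φ hsum a
    rwa [← Finset.add_sum_erase _ _ (Finset.mem_univ a), (hp a).isIdempotentElem.eq,
      add_eq_left] at h
  exact (Finset.sum_eq_zero_iff_of_nonneg fun c _ =>
    apply_mul_nonneg_of_isStarProjection φ hcomm hpos (hp a) (hp c)).mp hrest b
    (Finset.mem_erase.mpr ⟨hab.symm, Finset.mem_univ b⟩)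

end TracialFunctional

section MatrixTrace

variable {ι A B F : Type*} [Fintype ι] [FunLike F A B]

theorem map_trace_mul_comm [NonUnitalNonAssocSemiring A] [AddCommMonoid B]
    [AddMonoidHomClass F A B] (τ : F) (hτ : ∀ x y : A, τ (x * y) = τ (y * x))
    (M N : Matrix ι ι A) : τ (M * N).trace = τ (N * M).trace := by
  simp only [trace, diag, mul_apply, map_sum]
  rw [Finset.sum_comm]
  simp only [hτ]

theorem map_trace_conjTranspose_mul_self_nonneg [NonUnitalNonAssocSemiring A] [Star A]
    [AddCommMonoid B] [PartialOrder B] [IsOrderedAddMonoid B] [AddMonoidHomClass F A B]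
    (τ : F) (hτ : ∀ x : A, 0 ≤ τ (star x * x)) (M : Matrix ι ι A) :
    0 ≤ τ (Mᴴ * M).trace := by
  simp only [trace, diag, mul_apply, conjTranspose_apply, map_sum]
  exact Finset.sum_nonneg fun i _ => Finset.sum_nonneg fun k _ => hτ _

theorem map_trace_mul_conjTranspose [NonUnitalNonAssocSemiring A] [Star A] [AddCommMonoid B]
    [AddMonoidHomClass F A B] (τ : F) (M N : Matrix ι ι A) :
    τ (M * Nᴴ).trace = ∑ i, ∑ j, τ (M i j * star (N i j)) := by
  simp only [trace, diag, mul_apply, conjTranspose_apply, map_sum]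

end MatrixTrace

theorem trace_pvm_correlation_synchronous_general
    {A : Type*} [NormedRing A] [StarRing A]
    [NormedAlgebra ℂ A]
    (τ : A →ₗ[ℂ] ℂ) (hτ1 : τ 1 = 1)
    (hτpos : ∀ x : A, 0 ≤ τ (star x * x))
    (hτtr : ∀ x y : A, τ (x * y) = τ (y * x))
    (n c : ℕ) (hn : 1 ≤ n)
    (P : Fin c → Matrix (Fin n) (Fin n) A)
    (hadj : ∀ a, (P a)ᴴ = P a)
    (hidem : ∀ a, P a * P a = P a)
    (hsum : ∑ a, P a = 1) :
    (∀ a b : Fin c, a ≠ b → ∑ i, ∑ j, τ (P a i j * star (P b i j)) = 0) ∧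
    (1 / (n : ℂ)) * ∑ a, ∑ i, ∑ j, τ (P a i j * star (P a i j)) = 1 := by
  set φ := τ ∘ₗ traceLinearMap (Fin n) ℂ A
  have hφcomm (M N : Matrix (Fin n) (Fin n) A) : φ (M * N) = φ (N * M) :=
    map_trace_mul_comm τ hτtr M N
  have hφpos (M : Matrix (Fin n) (Fin n) A) : 0 ≤ φ (star M * M) :=
    map_trace_conjTranspose_mul_self_nonneg τ hτpos M
  have hproj (a : Fin c) : IsStarProjection (P a) := ⟨hidem a, hadj a⟩
  have hcorr (a b : Fin c) : ∑ i, ∑ j, τ (P a i j * star (P b i j)) = φ (P a * P b) := by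
    rw [← map_trace_mul_conjTranspose, hadj]; rfl
  have hφ1 : φ 1 = n := by
    simp only [φ, LinearMap.comp_apply, traceLinearMap_apply, trace_one, Fintype.card_fin,
      ← nsmul_one, map_nsmul, hτ1]
  refine ⟨fun a b hab => ?_, ?_⟩
  · rw [hcorr]
    exact apply_mul_eq_zero_of_sum_eq_one φ hφcomm hφpos hproj hsum hab
  · simp_rw [hcorr, hidem, ← map_sum, hsum, hφ1]
    field_simp

/-- If `τ` is a tracial state on a unital C*-algebra `A` and `P_1, …, P_c` is a PVM with `c`
outputs in `M_n(A)`, then the correlation `X^{(a,b)}_{(i,j),(k,l)} = τ(P_{a,ij} (P_{b,kl})*)`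
is synchronous: `∑_{i,j} τ(P_{a,ij} (P_{b,ij})*) = 0` whenever `a ≠ b`, and
`(1/n) ∑_a ∑_{i,j} τ(P_{a,ij} (P_{a,ij})*) = 1`. -/
theorem trace_pvm_correlation_synchronous
    {A : Type*} [NormedRing A] [StarRing A] [CStarRing A]
    [NormedAlgebra ℂ A] [CompleteSpace A] [StarModule ℂ A]
    (τ : A →ₗ[ℂ] ℂ) (hτ1 : τ 1 = 1)
    (hτpos : ∀ x : A, 0 ≤ τ (star x * x))
    (hτtr : ∀ x y : A, τ (x * y) = τ (y * x))
    (n c : ℕ) (hn : 1 ≤ n)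
    (P : Fin c → Matrix (Fin n) (Fin n) A)
    (hadj : ∀ a, (P a)ᴴ = P a)
    (hidem : ∀ a, P a * P a = P a)
    (hsum : ∑ a, P a = 1) :
    (∀ a b : Fin c, a ≠ b → ∑ i, ∑ j, τ (P a i j * star (P b i j)) = 0) ∧
    (1 / (n : ℂ)) * ∑ a, ∑ i, ∑ j, τ (P a i j * star (P a i j)) = 1 :=
  trace_pvm_correlation_synchronous_general τ hτ1 hτpos hτtr n c hn P hadj hidem hsum
end

section
/- Let d, k ≥ 1 and n = dk, let M = {I_d ⊗ A : A ∈ M_k(ℂ)} ⊆ M_n(ℂ) with commutant M' = {B ⊗ I_k : B ∈ M_d(ℂ)}, and let 𝒜 be a unital *-algebra over ℂ. For 1 ≤ a ≤ c, let q_a = (q_{a,pq}) ∈ M_k(𝒜) and let P_a ∈ M_n(𝒜) be the matrix with entries P_a((x,p),(y,q)) = δ_{xy} q_{a,pq} (indices x, y ∈ {1,…,d}, p, q ∈ {1,…,k}), i.e. P_a = I_d ⊗ q_a. Assume each P_a is a self-adjoint idempotent in M_n(𝒜), P_a P_b = 0 for a ≠ b, Σ_{a=1}^c P_a = I_n ⊗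 1_𝒜, and P_a (X ⊗ 1_𝒜) P_a = 0 for every X ∈ M_n(ℂ) with Tr(Y* X) = 0 for all Y ∈ M'. Then for each a, the element R_a = k · Σ_{p=1}^k q_{a,pp} of 𝒜 (which equals (k/d) times the entry-wise trace (Tr ⊗ id)(P_a)) is a self-adjoint idempotent, and Σ_{a=1}^c R_a = k² · 1_𝒜. -/
/-!
Compressing to one diagonal block turns the `P a` into self-adjoint idempotents `q a` with
`∑ a, q a = 1`, and the hypothesis on `X` into `q Z q = 0` for every traceless `Z ∈ M_k(ℂ)`.
Testing this with matrix units gives `q i p * q r j = 0` for `p ≠ r`, and shows that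
`q i p * q p j` does not depend on `p`; summing over `p` and using `q * q = q` then gives
`k * (q i p * q p j) = q i j`. Hence `(tr q)² = ∑ p, q p p * q p p` and `(k tr q)² = k tr q`.
-/

open Matrix
open scoped Kronecker

namespace Matrix

variable {ι n R 𝒜 : Type*}

section Compression

variable [Fintype n] [DecidableEq n]

theorem mul_single_one_mul_apply [Semiring 𝒜] (Q : Matrix n n 𝒜) (p r i j : n) :
    (Q * single p r (1 : 𝒜) * Q : Matrix n n 𝒜) i j = Q i p * Q r j := by
  simp [mul_apply, single, ite_and]

variable [CommRing R] [Ring 𝒜] [Algebra R 𝒜] {Q : Matrix n n 𝒜}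
  (hQ : ∀ Z : Matrix n n R, Z.trace = 0 → Q * Z.map (algebraMap R 𝒜) * Q = 0)
include hQ

theorem mul_apply_mul_apply_eq_zero_of_traceless {p r : n} (hpr : p ≠ r) (i j : n) :
    Q i p * Q r j = 0 := by
  have := congr_fun₂ (hQ (single p r 1) (trace_single_eq_of_ne p r 1 hpr)) i j
  rwa [map_single, map_one, mul_single_one_mul_apply] at this

theorem mul_apply_mul_apply_eq_of_traceless (p r i j : n) :
    Q i p * Q p j = Q i r * Q r j := by
  have htr : (single p p (1 : R) - single r r 1).trace = 0 := by
    simp [trace_sub, trace_single_eq_same]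
  have := congr_fun₂ (hQ _ htr) i j
  rwa [Matrix.map_sub _ (map_sub _), map_single, map_single, map_one, mul_sub, sub_mul, sub_apply,
    mul_single_one_mul_apply, mul_single_one_mul_apply, zero_apply, sub_eq_zero] at this

theorem card_mul_mul_apply_mul_apply_of_traceless (hidem : IsIdempotentElem Q) (i p j : n) :
    (Fintype.card n : 𝒜) * (Q i p * Q p j) = Q i j := by
  calc (Fintype.card n : 𝒜) * (Q i p * Q p j) = ∑ r, Q i r * Q r j := by
        rw [← nsmul_eq_mul, ← Finset.card_univ, ← Finset.sum_const]
        exact Finset.sum_congr rfl fun r _ => mul_apply_mul_apply_eq_of_traceless hQ p r i j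
    _ = Q i j := by rw [← mul_apply, hidem.eq]

theorem isIdempotentElem_card_mul_trace_of_traceless (hidem : IsIdempotentElem Q) :
    IsIdempotentElem ((Fintype.card n : 𝒜) * Q.trace) := by
  have hsq : Q.trace * Q.trace = ∑ p, Q p p * Q p p := by
    rw [trace, Finset.sum_mul_sum]
    refine Finset.sum_congr rfl fun p _ => Finset.sum_eq_single p
      (fun r _ hrp => mul_apply_mul_apply_eq_zero_of_traceless hQ hrp.symm p r) (by simp)
  rw [IsIdempotentElem, (Nat.cast_commute _ _).symm.mul_mul_mul_comm, hsq, Finset.mul_sum]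
  simp_rw [mul_assoc, card_mul_mul_apply_mul_apply_of_traceless hQ hidem]
  rw [← Finset.mul_sum]
  rfl

end Compression

theorem trace_kronecker_one_mul_kronecker_of_trace_eq_zero {m : Type*} [Fintype m] [Fintype n]
    [DecidableEq n] [CommSemiring R] (B A : Matrix m m R) {Z : Matrix n n R}
    (hZ : Z.trace = 0) : ((B ⊗ₖ (1 : Matrix n n R)) * (A ⊗ₖ Z)).trace = 0 := by
  rw [← mul_kronecker_mul, one_mul, trace_kronecker, hZ, mul_zero]

section BlockScalar

variable [DecidableEq ι] {P : Matrix (ι × n) (ι × n) 𝒜} {q : Matrix n n 𝒜}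

theorem submatrix_eq_of_blockScalar [Zero 𝒜]
    (hP : ∀ x y i j, P (x, i) (y, j) = if x = y then q i j else 0) (x : ι) :
    P.submatrix (Prod.mk x) (Prod.mk x) = q := by
  ext i j
  simp [hP]

theorem conjTranspose_eq_self_of_blockScalar [Zero 𝒜] [Star 𝒜] [Nonempty ι]
    (hP : ∀ x y i j, P (x, i) (y, j) = if x = y then q i j else 0) (hadj : Pᴴ = P) :
    qᴴ = q := by
  obtain ⟨x⟩ := ‹Nonempty ι›
  rw [← submatrix_eq_of_blockScalar hP x, conjTranspose_submatrix, hadj]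

variable [Fintype ι] [Fintype n] [Semiring 𝒜]
  (hP : ∀ x y i j, P (x, i) (y, j) = if x = y then q i j else 0)
include hP

theorem submatrix_blockScalar_mul (X : Matrix (ι × n) (ι × n) 𝒜) (x y : ι) :
    (P * X).submatrix (Prod.mk x) (Prod.mk y) = q * X.submatrix (Prod.mk x) (Prod.mk y) := by
  ext i j
  simp [mul_apply, Fintype.sum_prod_type, hP]

theorem submatrix_mul_blockScalar (X : Matrix (ι × n) (ι × n) 𝒜) (x y : ι) :
    (X * P).submatrix (Prod.mk x) (Prod.mk y) = X.submatrix (Prod.mk x) (Prod.mk y) * q := by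
  ext i j
  simp [mul_apply, Fintype.sum_prod_type, hP]

theorem isIdempotentElem_of_blockScalar [Nonempty ι] (hidem : IsIdempotentElem P) :
    IsIdempotentElem q := by
  obtain ⟨x⟩ := ‹Nonempty ι›
  have := congrArg (submatrix · (Prod.mk x) (Prod.mk x)) hidem.eq
  rwa [submatrix_blockScalar_mul hP, submatrix_eq_of_blockScalar hP] at this

theorem mul_map_mul_eq_zero_of_perp_kronecker_one [DecidableEq n] [CommRing R] [StarRing R]
    [Algebra R 𝒜] [Nonempty ι]
    (hperp : ∀ X : Matrix (ι × n) (ι × n) R,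
      (∀ B : Matrix ι ι R, ((B ⊗ₖ (1 : Matrix n n R))ᴴ * X).trace = 0) →
      P * X.map (algebraMap R 𝒜) * P = 0)
    {Z : Matrix n n R} (hZ : Z.trace = 0) :
    q * Z.map (algebraMap R 𝒜) * q = 0 := by
  obtain ⟨x⟩ := ‹Nonempty ι›
  -- a traceless `Z` placed in one diagonal block is orthogonal to `M_ι ⊗ 1`
  set X := single x x 1 ⊗ₖ Z
  have hX (B : Matrix ι ι R) : ((B ⊗ₖ (1 : Matrix n n R))ᴴ * X).trace = 0 := by
    rw [conjTranspose_kronecker, conjTranspose_one]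
    exact trace_kronecker_one_mul_kronecker_of_trace_eq_zero _ _ hZ
  have hXblock : (X.map (algebraMap R 𝒜)).submatrix (Prod.mk x) (Prod.mk x) =
      Z.map (algebraMap R 𝒜) := by
    ext i j
    simp [X]
  have := congrArg (submatrix · (Prod.mk x) (Prod.mk x)) (hperp X hX)
  rwa [mul_assoc, submatrix_blockScalar_mul hP, submatrix_mul_blockScalar hP, hXblock,
    ← mul_assoc] at this

end BlockScalar

end Matrix

theorem rigidity_one_block_general (d k : ℕ) (hd : 1 ≤ d)
    (𝒜 : Type*) [Ring 𝒜] [Algebra ℂ 𝒜] [StarRing 𝒜]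
    (c : ℕ)
    (q : Fin c → Matrix (Fin k) (Fin k) 𝒜)
    (P : Fin c → Matrix (Fin d × Fin k) (Fin d × Fin k) 𝒜)
    (hPq : ∀ (a : Fin c) (x y : Fin d) (p₁ p₂ : Fin k),
      P a (x, p₁) (y, p₂) = if x = y then q a p₁ p₂ else 0)
    (hadj : ∀ a, (P a)ᴴ = P a)
    (hidem : ∀ a, P a * P a = P a)
    (hsum : ∑ a, P a = 1)
    (hperp : ∀ (a : Fin c) (X : Matrix (Fin d × Fin k) (Fin d × Fin k) ℂ),
      (∀ B : Matrix (Fin d) (Fin d) ℂ,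
        ((B ⊗ₖ (1 : Matrix (Fin k) (Fin k) ℂ))ᴴ * X).trace = 0) →
      P a * X.map (algebraMap ℂ 𝒜) * P a = 0) :
    (∀ a, star ((k : 𝒜) * ∑ p, q a p p) = (k : 𝒜) * ∑ p, q a p p ∧
      ((k : 𝒜) * ∑ p, q a p p) * ((k : 𝒜) * ∑ p, q a p p) = (k : 𝒜) * ∑ p, q a p p) ∧
    ∑ a, ((k : 𝒜) * ∑ p, q a p p) = (k : 𝒜) ^ 2 := by
  have : Nonempty (Fin d) := ⟨⟨0, hd⟩⟩
  have hq_adj a : IsSelfAdjoint (q a).trace := by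
    rw [IsSelfAdjoint, ← trace_conjTranspose,
      conjTranspose_eq_self_of_blockScalar (hPq a) (hadj a)]
  have hq_sum : ∑ a, q a = 1 := by
    ext i j
    simpa [Matrix.sum_apply, hPq, one_apply] using
      congr_fun₂ hsum (⟨0, hd⟩, i) (⟨0, hd⟩, j)
  refine ⟨fun a => ⟨?_, ?_⟩, ?_⟩
  · exact ((IsSelfAdjoint.natCast k).commute_iff (hq_adj a)).mp (Nat.cast_commute k _)
  · have := isIdempotentElem_card_mul_trace_of_traceless
      (fun _ => mul_map_mul_eq_zero_of_perp_kronecker_one (hPq a) (hperp a))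
      (isIdempotentElem_of_blockScalar (hPq a) (hidem a))
    rwa [Fintype.card_fin] at this
  · calc ∑ a, ((k : 𝒜) * (q a).trace) = k * (∑ a, q a).trace := by
          rw [trace_sum, Finset.mul_sum]
      _ = k ^ 2 := by rw [hq_sum, trace_one, Fintype.card_fin, sq]

/-- **Lemma (rigidity of colorings of one-block complete graphs).**  Let `n = dk`,
`M = ℂI_d ⊗ M_k ⊆ M_n(ℂ)` (with commutant `M' = M_d ⊗ ℂI_k`), and let `𝒜` be a unital
*-algebra over `ℂ`.  Suppose `P_1, …, P_c ∈ M ⊗ 𝒜 ⊆ M_n(𝒜)` are mutually orthogonal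
self-adjoint idempotents summing to the identity, of the form `P_a = I_d ⊗ q_a` with
`q_a ∈ M_k(𝒜)`, such that `P_a (X ⊗ 1_𝒜) P_a = 0` for every `X ∈ M_n(ℂ)` orthogonal to `M'`.
Then each `R_a = k · ∑_p q_{a,pp}` is a self-adjoint idempotent in `𝒜`, and
`∑_{a=1}^c R_a = k² · 1_𝒜`. -/
theorem rigidity_one_block (d k : ℕ) (hd : 1 ≤ d) (hk : 1 ≤ k)
    (𝒜 : Type*) [Ring 𝒜] [Algebra ℂ 𝒜] [StarRing 𝒜] [StarModule ℂ 𝒜]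
    (c : ℕ)
    (q : Fin c → Matrix (Fin k) (Fin k) 𝒜)
    (P : Fin c → Matrix (Fin d × Fin k) (Fin d × Fin k) 𝒜)
    (hPq : ∀ (a : Fin c) (x y : Fin d) (p₁ p₂ : Fin k),
      P a (x, p₁) (y, p₂) = if x = y then q a p₁ p₂ else 0)
    (hadj : ∀ a, (P a)ᴴ = P a)
    (hidem : ∀ a, P a * P a = P a)
    (horth : ∀ a b, a ≠ b → P a * P b = 0)
    (hsum : ∑ a, P a = 1)
    (hperp : ∀ (a : Fin c) (X : Matrix (Fin d × Fin k) (Fin d × Fin k) ℂ),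
      (∀ B : Matrix (Fin d) (Fin d) ℂ,
        ((B ⊗ₖ (1 : Matrix (Fin k) (Fin k) ℂ))ᴴ * X).trace = 0) →
      P a * X.map (algebraMap ℂ 𝒜) * P a = 0) :
    (∀ a, star ((k : 𝒜) * ∑ p, q a p p) = (k : 𝒜) * ∑ p, q a p p ∧
      ((k : 𝒜) * ∑ p, q a p p) * ((k : 𝒜) * ∑ p, q a p p) = (k : 𝒜) * ∑ p, q a p p) ∧
    ∑ a, ((k : 𝒜) * ∑ p, q a p p) = (k : 𝒜) ^ 2 :=
  rigidity_one_block_general d k hd 𝒜 c q P hPq hadj hidem hsum hperp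
end

section
/- Let M ⊆ M_n(ℂ) be a unital *-subalgebra with commutant M', and let 𝒜 be a nonzero hereditary unital *-algebra over ℂ. Suppose P_1, …, P_c ∈ M_n(𝒜) are self-adjoint idempotents with P_a P_b = 0 for a ≠ b and Σ_{a=1}^c P_a = I_n ⊗ 1_𝒜, such that each P_a commutes with Y ⊗ 1_𝒜 for every Y ∈ M' (i.e. P_a ∈ M ⊗ 𝒜), and P_a (X ⊗ 1_𝒜) P_a = 0 for every X ∈ M_n(ℂ) with Tr(Y* X) = 0 for all Y ∈ M'. Then c ≥ dim_ℂ M. (That is, any hereditary coloring of the complete quantum graph (M_n, M, M_n) requires at least dim(M) colors.) -/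
/-!
Let `N = M'`, and let `(b_s)` be an orthonormal basis of `N` for the trace inner product. The
Casimir element `C = ∑ b_s* b_s` is invertible and commutes with `N`, and `X ↦ (∑ b_s* X b_s) C⁻¹`
is a projection onto `N' ⊇ M` of trace `tr C⁻¹`; hence `W = C⁻¹` has `tr W = dim N' ≥ dim M`.

For a colour `P`, the two hypotheses give `P (X ⊗ 1) P = (E X ⊗ 1) P`, where `E` is the orthogonal
projection onto `N`. Writing `S = Tr ((W ⊗ 1) P)`, the square `S²` is a sum of entries of the
sandwiches `P (W e_ij W ⊗ 1) P`, and expanding `E (W e_ij W)` in the basis `(b_s)` gives back `S`.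
So the `S_a` are self-adjoint idempotents of `𝒜` with `∑ S_a = tr W`, and in a nonzero hereditary
algebra `c` of them cannot add up to `d · 1` with `d > c`, since then
`∑ (1 - S_a)* (1 - S_a) + (d - c) · 1* 1 = 0`.
-/

open Matrix
open scoped ComplexOrder InnerProductSpace

namespace HereditaryColoring

section LinearAlgebra

variable {R : Type*} {n : Type*} [Fintype n] [DecidableEq n]

lemma mul_single_one_mul_apply [Semiring R] (A B : Matrix n n R) (i j k l : n) :
    (A * single i j 1 * B : Matrix n n R) k l = A k i * B j l := by
  simp [Matrix.mul_apply, single_apply, ite_and]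

lemma trace_eq_sum_single [CommRing R] (f : Matrix n n R →ₗ[R] Matrix n n R) :
    LinearMap.trace R _ f = ∑ i, ∑ j, f (single i j 1) i j := by
  have hrepr : ∀ y (i j : n), (stdBasis R n n).repr y (i, j) = y i j := by
    intros; simp [stdBasis]
  rw [LinearMap.trace_eq_matrix_trace R (stdBasis R n n), Matrix.trace, Fintype.sum_prod_type]
  simp only [diag_apply, LinearMap.toMatrix_apply, stdBasis_eq_single, hrepr]

lemma trace_mulLeft_comp_mulRight [CommRing R] (A B : Matrix n n R) :
    LinearMap.trace R _ (LinearMap.mulLeft R A ∘ₗ LinearMap.mulRight R B) = A.trace * B.trace := by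
  simp only [trace_eq_sum_single, LinearMap.comp_apply, LinearMap.mulLeft_apply,
    LinearMap.mulRight_apply, ← Matrix.mul_assoc, mul_single_one_mul_apply, trace, diag_apply,
    Finset.sum_mul_sum]

end LinearAlgebra

section AlgebraValued

variable {n : Type*} [Fintype n] {𝒜 : Type*} [Ring 𝒜] [Algebra ℂ 𝒜]

local notation "ι" => algebraMap ℂ 𝒜

lemma trace_mul_map (A : Matrix n n ℂ) (Q : Matrix n n 𝒜) :
    (Q * A.map ι).trace = (A.map ι * Q).trace := by
  simp only [trace, diag_apply, Matrix.mul_apply, map_apply, Algebra.commutes]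
  exact Finset.sum_comm

lemma trace_map_mul_mul_trace_map_mul [DecidableEq n] (A B : Matrix n n ℂ)
    (Q Q' : Matrix n n 𝒜) :
    (A.map ι * Q).trace * (B.map ι * Q').trace
      = ∑ i, ∑ j, (Q * (A * single i j 1 * B).map ι * Q') i j := by
  rw [← trace_mul_map A, trace, trace, Finset.sum_mul_sum]
  refine Finset.sum_congr rfl fun i _ => Finset.sum_congr rfl fun j _ => ?_
  have : Q * (A * single i j 1 * B).map ι * Q' = Q * A.map ι * single i j 1 * (B.map ι * Q') := by
    simp only [Matrix.map_mul, map_single, map_one, Matrix.mul_assoc]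
  rw [this, mul_single_one_mul_apply, diag_apply, diag_apply]

lemma sum_map_mul_apply (Y : n → n → Matrix n n ℂ) (Q : Matrix n n 𝒜) :
    ∑ i, ∑ j, ((Y i j).map ι * Q) i j = ((of fun j l => ∑ i, Y i j i l).map ι * Q).trace := by
  simp only [trace, diag_apply, Matrix.mul_apply, map_apply, of_apply, map_sum, Finset.sum_mul]
  rw [Finset.sum_comm]
  exact Finset.sum_congr rfl fun j _ => Finset.sum_comm

lemma star_trace_map_mul [StarRing 𝒜] [StarModule ℂ 𝒜] {W : Matrix n n ℂ} {Q : Matrix n n 𝒜}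
    (hW : Wᴴ = W) (hQ : Qᴴ = Q) : star (W.map ι * Q).trace = (W.map ι * Q).trace := by
  rw [← trace_conjTranspose, conjTranspose_mul, hQ, ← conjTranspose_map _ algebraMap_star_comm,
    hW, trace_mul_map]

end AlgebraValued

lemma le_of_sum_projections_eq_natCast {𝒜 : Type*} [Ring 𝒜] [StarRing 𝒜] (h1 : (1 : 𝒜) ≠ 0)
    (her : ∀ (N : ℕ) (x : Fin N → 𝒜), ∑ i, star (x i) * x i = 0 → ∀ i, x i = 0)
    {c d : ℕ} (S : Fin c → 𝒜) (hidem : ∀ a, IsIdempotentElem (S a))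
    (hstar : ∀ a, star (S a) = S a) (hsum : ∑ a, S a = d) : d ≤ c := by
  by_contra! hcd
  obtain ⟨k, rfl⟩ := Nat.exists_eq_add_of_lt hcd
  set x : Fin (c + (k + 1)) → 𝒜 := Fin.append (fun a => 1 - S a) (fun _ => 1)
  have hzero : ∑ i, star (x i) * x i = 0 := by
    have hS : ∀ a, star (1 - S a) * (1 - S a) = 1 - S a := fun a => by
      rw [star_sub, star_one, hstar, sub_mul, one_mul, mul_sub, mul_one, (hidem a).eq, sub_self,
        sub_zero]
    simp only [x, Fin.sum_univ_add, Fin.append_left, Fin.append_right, star_one, hS,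
      Finset.sum_sub_distrib, hsum, Finset.sum_const, Finset.card_univ, Fintype.card_fin,
      nsmul_eq_mul, mul_one]
    push_cast; abel
  exact h1 (by simpa [x] using her _ x hzero (Fin.natAdd c 0))

section Casimir

variable {n : Type*} [Fintype n] [DecidableEq n]

noncomputable local instance : NormedAddCommGroup (Matrix n n ℂ) :=
  (1 : Matrix n n ℂ).toMatrixNormedAddCommGroup PosDef.one

noncomputable local instance : InnerProductSpace ℂ (Matrix n n ℂ) :=
  (1 : Matrix n n ℂ).toMatrixInnerProductSpace PosDef.one.posSemidef

lemma inner_eq_trace (x y : Matrix n n ℂ) : ⟪x, y⟫_ℂ = (xᴴ * y).trace := by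
  change (y * 1 * xᴴ).trace = _
  rw [Matrix.mul_one, trace_mul_comm]

lemma inner_mul_conjTranspose_left (x y Z : Matrix n n ℂ) : ⟪x * Zᴴ, y⟫_ℂ = ⟪x, y * Z⟫_ℂ := by
  rw [inner_eq_trace, inner_eq_trace, conjTranspose_mul, conjTranspose_conjTranspose,
    Matrix.mul_assoc, trace_mul_comm, Matrix.mul_assoc]

variable {K : StarSubalgebra ℂ (Matrix n n ℂ)} {ι : Type*} [Fintype ι]
  (b : OrthonormalBasis ι ℂ (Subalgebra.toSubmodule K.toSubalgebra))

lemma coe_basis_mem (s : ι) : (b s : Matrix n n ℂ) ∈ K := (b s).2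

lemma sum_inner_smul_eq_self {x : Matrix n n ℂ} (hx : x ∈ K) :
    ∑ s, ⟪(b s : Matrix n n ℂ), x⟫_ℂ • (b s : Matrix n n ℂ) = x := by
  simpa using congrArg Subtype.val (b.sum_repr' ⟨x, hx⟩)

noncomputable def twirl (X : Matrix n n ℂ) : Matrix n n ℂ := ∑ s, (b s : Matrix n n ℂ)ᴴ * X * b s

/- Both sides expand to `∑ s t, ⟪b s, b t * Z⟫ • (b t)ᴴ * X * b s`: right multiplication by `Zᴴ`
is adjoint to right multiplication by `Z`. -/
lemma commute_twirl {Z : Matrix n n ℂ} (hZ : Z ∈ K) (X : Matrix n n ℂ) :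
    Commute Z (twirl b X) := by
  have hleft : ∀ s, Z * (b s : Matrix n n ℂ)ᴴ
      = ∑ t, ⟪b s * Zᴴ, (b t : Matrix n n ℂ)⟫_ℂ • (b t : Matrix n n ℂ)ᴴ := by
    intro s
    have hmem : (b s : Matrix n n ℂ) * Zᴴ ∈ K := mul_mem (coe_basis_mem b s) (star_mem hZ)
    conv_lhs =>
      rw [← conjTranspose_conjTranspose Z, ← conjTranspose_mul, ← sum_inner_smul_eq_self b hmem]
    simp [conjTranspose_sum, conjTranspose_smul]
  have hright : ∀ t, (b t : Matrix n n ℂ) * Z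
      = ∑ s, ⟪(b s : Matrix n n ℂ), b t * Z⟫_ℂ • (b s : Matrix n n ℂ) :=
    fun t => (sum_inner_smul_eq_self b (mul_mem (coe_basis_mem b t) hZ)).symm
  calc Z * twirl b X
      = ∑ s, ∑ t, ⟪b s * Zᴴ, (b t : Matrix n n ℂ)⟫_ℂ • ((b t : Matrix n n ℂ)ᴴ * X * b s) := by
        simp only [twirl, Matrix.mul_sum, ← Matrix.mul_assoc, hleft, Matrix.sum_mul,
          Matrix.smul_mul]
    _ = ∑ t, ∑ s, ⟪(b s : Matrix n n ℂ), b t * Z⟫_ℂ • ((b t : Matrix n n ℂ)ᴴ * X * b s) := by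
        rw [Finset.sum_comm]
        simp only [inner_mul_conjTranspose_left]
    _ = ∑ t, (b t : Matrix n n ℂ)ᴴ * X * (b t * Z) := by
        refine Finset.sum_congr rfl fun t _ => ?_
        conv_rhs => rw [hright t]
        simp only [Matrix.mul_sum, Matrix.mul_smul]
    _ = twirl b X * Z := by simp only [twirl, Matrix.sum_mul, Matrix.mul_assoc]

lemma twirl_of_mem_centralizer {Y : Matrix n n ℂ}
    (hY : Y ∈ Subalgebra.centralizer ℂ (K : Set (Matrix n n ℂ))) : twirl b Y = Y * twirl b 1 := by
  rw [Subalgebra.mem_centralizer_iff ℂ] at hY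
  simp only [twirl, Matrix.mul_one, Matrix.mul_sum]
  refine Finset.sum_congr rfl fun s _ => ?_
  rw [← Matrix.mul_assoc]
  exact congrArg (· * _) (hY _ (star_mem (coe_basis_mem b s)))

lemma twirl_mem_centralizer (X : Matrix n n ℂ) :
    twirl b X ∈ Subalgebra.centralizer ℂ (K : Set (Matrix n n ℂ)) :=
  (Subalgebra.mem_centralizer_iff ℂ).mpr fun _ hZ => (commute_twirl b hZ X).eq

lemma isUnit_twirl_one : IsUnit (twirl b 1) := by
  by_contra h
  rw [isUnit_iff_isUnit_det, isUnit_iff_ne_zero, not_not, ← exists_mulVec_eq_zero_iff] at h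
  obtain ⟨v, hv0, hv⟩ := h
  have hsum : ∑ s, star ((b s : Matrix n n ℂ) *ᵥ v) ⬝ᵥ ((b s : Matrix n n ℂ) *ᵥ v) = 0 := by
    rw [← dotProduct_zero (star v), ← hv]
    simp only [twirl, Matrix.mul_one, sum_mulVec, dotProduct_sum, ← mulVec_mulVec,
      dotProduct_mulVec, star_mulVec]
  have hbv : ∀ s, (b s : Matrix n n ℂ) *ᵥ v = 0 := fun s => dotProduct_star_self_eq_zero.mp
    ((Finset.sum_eq_zero_iff_of_nonneg fun s _ => dotProduct_star_self_nonneg _).mp hsum s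
      (Finset.mem_univ s))
  apply hv0
  rw [← one_mulVec v, ← sum_inner_smul_eq_self b (one_mem K)]
  simp [sum_mulVec, smul_mulVec, hbv]

variable (K) in
noncomputable def casimir : Matrix n n ℂ :=
  twirl (stdOrthonormalBasis ℂ (Subalgebra.toSubmodule K.toSubalgebra)) 1

lemma isUnit_casimir : IsUnit (casimir K) := isUnit_twirl_one _

lemma conjTranspose_casimir : (casimir K)ᴴ = casimir K := by
  simp [casimir, twirl, conjTranspose_sum]

lemma casimir_inv_mul_casimir : (casimir K)⁻¹ * casimir K = 1 :=
  nonsing_inv_mul _ ((isUnit_iff_isUnit_det _).mp isUnit_casimir)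

lemma casimir_mul_casimir_inv : casimir K * (casimir K)⁻¹ = 1 :=
  mul_nonsing_inv _ ((isUnit_iff_isUnit_det _).mp isUnit_casimir)

lemma conjTranspose_casimir_inv : ((casimir K)⁻¹)ᴴ = (casimir K)⁻¹ := by
  rw [conjTranspose_nonsing_inv, conjTranspose_casimir]

lemma commute_casimir_inv {Z : Matrix n n ℂ} (hZ : Z ∈ K) : Commute Z (casimir K)⁻¹ := by
  have h := (commute_twirl _ hZ 1).units_inv_right (u := isUnit_casimir.unit)
  rwa [coe_units_inv, IsUnit.unit_spec] at h

lemma casimir_inv_mem_centralizer :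
    (casimir K)⁻¹ ∈ Subalgebra.centralizer ℂ (K : Set (Matrix n n ℂ)) :=
  (Subalgebra.mem_centralizer_iff ℂ).mpr fun _ hZ => (commute_casimir_inv hZ).eq

lemma trace_casimir_inv :
    ((casimir K)⁻¹).trace
      = Module.finrank ℂ (Subalgebra.centralizer ℂ (K : Set (Matrix n n ℂ))) := by
  set b := stdOrthonormalBasis ℂ (Subalgebra.toSubmodule K.toSubalgebra)
  set W := (casimir K)⁻¹
  let Φ : Matrix n n ℂ →ₗ[ℂ] Matrix n n ℂ :=
    ∑ s, LinearMap.mulLeft ℂ (b s : Matrix n n ℂ)ᴴ ∘ₗ LinearMap.mulRight ℂ (b s * W)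
  have hΦ : ∀ X, Φ X = twirl b X * W := fun X => by
    simp [Φ, twirl, Matrix.sum_mul, Matrix.mul_assoc]
  have hproj : LinearMap.IsProj
      (Subalgebra.toSubmodule (Subalgebra.centralizer ℂ (K : Set (Matrix n n ℂ)))) Φ := by
    refine ⟨fun X => ?_, fun Y hY => ?_⟩
    · rw [hΦ, Subalgebra.mem_toSubmodule]
      exact mul_mem (twirl_mem_centralizer b X) casimir_inv_mem_centralizer
    · rw [hΦ, twirl_of_mem_centralizer b hY, Matrix.mul_assoc]
      exact (congrArg (Y * ·) casimir_mul_casimir_inv).trans (Matrix.mul_one Y)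
  have htrace : LinearMap.trace ℂ _ Φ = W.trace := by
    have hinner : ∀ s, (b s : Matrix n n ℂ)ᴴ.trace = ⟪(b s : Matrix n n ℂ), 1⟫_ℂ := fun s => by
      rw [inner_eq_trace, Matrix.mul_one]
    calc LinearMap.trace ℂ _ Φ
        = ((∑ s, ⟪(b s : Matrix n n ℂ), 1⟫_ℂ • (b s : Matrix n n ℂ)) * W).trace := by
          simp only [Φ, map_sum, trace_mulLeft_comp_mulRight, Matrix.sum_mul, trace_sum,
            Matrix.smul_mul, trace_smul, smul_eq_mul, hinner]
      _ = W.trace := by rw [sum_inner_smul_eq_self b (one_mem K), Matrix.one_mul]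
  rw [← htrace, hproj.trace]
  rfl

lemma sum_starProjection_casimir_inv_sandwich (j l : n) :
    ∑ i, (Subalgebra.toSubmodule K.toSubalgebra).starProjection
      ((casimir K)⁻¹ * single i j 1 * (casimir K)⁻¹) i l = (casimir K)⁻¹ j l := by
  set b := stdOrthonormalBasis ℂ (Subalgebra.toSubmodule K.toSubalgebra)
  set W := (casimir K)⁻¹
  have hcoef : ∀ s i, ⟪(b s : Matrix n n ℂ), W * single i j 1 * W⟫_ℂ
      = (W * (b s : Matrix n n ℂ)ᴴ * W) j i := fun s i => by
    rw [inner_eq_trace, ← Matrix.mul_assoc, ← Matrix.mul_assoc, trace_mul_comm,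
      ← Matrix.mul_assoc, ← Matrix.mul_assoc, trace_mul_single]
    simp
  have hsum : ∑ s, W * (b s : Matrix n n ℂ)ᴴ * W * b s = W := by
    calc ∑ s, W * (b s : Matrix n n ℂ)ᴴ * W * b s = W * (W * twirl b 1) := by
          simp only [twirl, Matrix.mul_one, Matrix.mul_sum]
          refine Finset.sum_congr rfl fun s _ => ?_
          have hc : (b s : Matrix n n ℂ)ᴴ * W = W * (b s : Matrix n n ℂ)ᴴ :=
            (commute_casimir_inv (star_mem (coe_basis_mem b s))).eq
          rw [Matrix.mul_assoc W, hc]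
          simp only [Matrix.mul_assoc]
      _ = W := by rw [show twirl b 1 = casimir K from rfl, casimir_inv_mul_casimir, Matrix.mul_one]
  have hE : ∀ Y, (Subalgebra.toSubmodule K.toSubalgebra).starProjection Y
      = ∑ s, ⟪(b s : Matrix n n ℂ), Y⟫_ℂ • (b s : Matrix n n ℂ) := fun Y => by
    rw [Submodule.starProjection_apply, b.orthogonalProjectionOnto_apply_eq_sum]
    simp
  simp only [hE, Matrix.sum_apply, Matrix.smul_apply, hcoef, smul_eq_mul]
  rw [Finset.sum_comm]
  conv_rhs => rw [← hsum]
  simp only [Matrix.sum_apply, Matrix.mul_apply (M := W * _ * W)]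

variable {𝒜 : Type*} [Ring 𝒜] [Algebra ℂ 𝒜]

lemma isIdempotentElem_trace_casimir_inv_map_mul {Q : Matrix n n 𝒜} (hQ : IsIdempotentElem Q)
    (hcomm : ∀ Y ∈ K, Q * Y.map (algebraMap ℂ 𝒜) = Y.map (algebraMap ℂ 𝒜) * Q)
    (hperp : ∀ X, (∀ Y ∈ K, (Yᴴ * X).trace = 0) → Q * X.map (algebraMap ℂ 𝒜) * Q = 0) :
    IsIdempotentElem (((casimir K)⁻¹.map (algebraMap ℂ 𝒜)) * Q).trace := by
  set E := (Subalgebra.toSubmodule K.toSubalgebra).starProjection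
  have hsandwich : ∀ X, Q * X.map (algebraMap ℂ 𝒜) * Q = (E X).map (algebraMap ℂ 𝒜) * Q := by
    intro X
    have hEX : E X ∈ K :=
      Submodule.starProjection_apply_mem (Subalgebra.toSubmodule K.toSubalgebra) X
    have hperpX : ∀ Y ∈ K, (Yᴴ * (X - E X)).trace = 0 := fun Y hY => by
      rw [← inner_eq_trace]
      exact Submodule.inner_right_of_mem_orthogonal hY
        (Submodule.sub_starProjection_mem_orthogonal X)
    calc Q * X.map (algebraMap ℂ 𝒜) * Q
        = Q * (X - E X).map (algebraMap ℂ 𝒜) * Q + Q * (E X).map (algebraMap ℂ 𝒜) * Q := by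
          rw [← Matrix.add_mul, ← Matrix.mul_add, ← Matrix.map_add _ (map_add _), sub_add_cancel]
      _ = (E X).map (algebraMap ℂ 𝒜) * Q := by
          rw [hperp _ hperpX, zero_add, hcomm _ hEX, Matrix.mul_assoc, hQ.eq]
  rw [IsIdempotentElem, trace_map_mul_mul_trace_map_mul]
  simp only [hsandwich, sum_map_mul_apply]
  congr 3
  ext j l
  exact sum_starProjection_casimir_inv_sandwich j l

end Casimir

lemma mem_centralizer_iff_forall_mul_comm {A : Type*} [Ring A] [StarRing A] [Algebra ℂ A]
    [StarModule ℂ A] {M : StarSubalgebra ℂ A} {Y : A} :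
    Y ∈ StarSubalgebra.centralizer ℂ (M : Set A) ↔ ∀ X ∈ M, Y * X = X * Y := by
  rw [StarSubalgebra.mem_centralizer_iff]
  exact ⟨fun h X hX => (h X hX).1.symm, fun h X hX => ⟨(h X hX).symm, (h _ (star_mem hX)).symm⟩⟩

lemma finrank_le_finrank_centralizer_centralizer {n : Type*} [Fintype n] [DecidableEq n]
    (M : StarSubalgebra ℂ (Matrix n n ℂ)) :
    Module.finrank ℂ M ≤ Module.finrank ℂ (Subalgebra.centralizer ℂ
      (StarSubalgebra.centralizer ℂ (M : Set (Matrix n n ℂ)) : Set (Matrix n n ℂ))) := by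
  have hle : Subalgebra.toSubmodule M.toSubalgebra ≤ Subalgebra.toSubmodule
      (Subalgebra.centralizer ℂ
        (StarSubalgebra.centralizer ℂ (M : Set (Matrix n n ℂ)) : Set (Matrix n n ℂ))) :=
    fun A hA => (Subalgebra.mem_centralizer_iff ℂ).mpr fun _ hY =>
      mem_centralizer_iff_forall_mul_comm.mp hY A hA
  exact Submodule.finrank_mono hle

end HereditaryColoring

open HereditaryColoring

theorem hereditary_coloring_needs_dim_colors_general {n : ℕ}
    (M : StarSubalgebra ℂ (Matrix (Fin n) (Fin n) ℂ))
    (𝒜 : Type*) [Ring 𝒜] [Algebra ℂ 𝒜] [StarRing 𝒜] [StarModule ℂ 𝒜]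
    (h𝒜nz : (1 : 𝒜) ≠ 0)
    (h𝒜her : ∀ (N : ℕ) (x : Fin N → 𝒜), ∑ i, star (x i) * x i = 0 → ∀ i, x i = 0)
    (c : ℕ)
    (P : Fin c → Matrix (Fin n) (Fin n) 𝒜)
    (hadj : ∀ a, (P a)ᴴ = P a)
    (hidem : ∀ a, P a * P a = P a)
    (hsum : ∑ a, P a = 1)
    (hcomm : ∀ (a : Fin c) (Y : Matrix (Fin n) (Fin n) ℂ), (∀ A ∈ M, Y * A = A * Y) →
      P a * Y.map (algebraMap ℂ 𝒜) = Y.map (algebraMap ℂ 𝒜) * P a)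
    (hperp : ∀ (a : Fin c) (X : Matrix (Fin n) (Fin n) ℂ),
      (∀ Y : Matrix (Fin n) (Fin n) ℂ, (∀ A ∈ M, Y * A = A * Y) → (Yᴴ * X).trace = 0) →
      P a * X.map (algebraMap ℂ 𝒜) * P a = 0) :
    Module.finrank ℂ M ≤ c := by
  set N := StarSubalgebra.centralizer ℂ (M : Set (Matrix (Fin n) (Fin n) ℂ))
  set W := (casimir N)⁻¹
  refine (finrank_le_finrank_centralizer_centralizer M).trans <|
    le_of_sum_projections_eq_natCast h𝒜nz h𝒜her (fun a => (W.map (algebraMap ℂ 𝒜) * P a).trace)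
      (fun a => ?_) (fun a => star_trace_map_mul conjTranspose_casimir_inv (hadj a)) ?_
  · exact isIdempotentElem_trace_casimir_inv_map_mul (hidem a)
      (fun Y hY => hcomm a Y (mem_centralizer_iff_forall_mul_comm.mp hY))
      (fun X hX => hperp a X fun Y hY => hX Y (mem_centralizer_iff_forall_mul_comm.mpr hY))
  · rw [← trace_sum, ← Matrix.mul_sum, hsum, Matrix.mul_one, ← AddMonoidHom.map_trace,
      trace_casimir_inv, map_natCast]

/-- **Theorem (hereditary colorings of complete quantum graphs need `dim M` colors).**
Let `M ⊆ M_n(ℂ)` be a unital *-subalgebra with commutant `M'` and let `𝒜` be a nonzero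
hereditary unital *-algebra over `ℂ`.  If `P_1, …, P_c ∈ M_n(𝒜)` are mutually orthogonal
self-adjoint idempotents summing to the identity which commute with `Y ⊗ 1_𝒜` for every
`Y ∈ M'` (i.e. `P_a ∈ M ⊗ 𝒜`) and satisfy `P_a (X ⊗ 1_𝒜) P_a = 0` for every `X ⊥ M'`,
then `c ≥ dim_ℂ M`. -/
theorem hereditary_coloring_needs_dim_colors {n : ℕ}
    (M : StarSubalgebra ℂ (Matrix (Fin n) (Fin n) ℂ))
    (𝒜 : Type*) [Ring 𝒜] [Algebra ℂ 𝒜] [StarRing 𝒜] [StarModule ℂ 𝒜]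
    (h𝒜nz : (1 : 𝒜) ≠ 0)
    (h𝒜her : ∀ (N : ℕ) (x : Fin N → 𝒜), ∑ i, star (x i) * x i = 0 → ∀ i, x i = 0)
    (c : ℕ)
    (P : Fin c → Matrix (Fin n) (Fin n) 𝒜)
    (hadj : ∀ a, (P a)ᴴ = P a)
    (hidem : ∀ a, P a * P a = P a)
    (horth : ∀ a b, a ≠ b → P a * P b = 0)
    (hsum : ∑ a, P a = 1)
    (hcomm : ∀ (a : Fin c) (Y : Matrix (Fin n) (Fin n) ℂ), (∀ A ∈ M, Y * A = A * Y) →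
      P a * Y.map (algebraMap ℂ 𝒜) = Y.map (algebraMap ℂ 𝒜) * P a)
    (hperp : ∀ (a : Fin c) (X : Matrix (Fin n) (Fin n) ℂ),
      (∀ Y : Matrix (Fin n) (Fin n) ℂ, (∀ A ∈ M, Y * A = A * Y) → (Yᴴ * X).trace = 0) →
      P a * X.map (algebraMap ℂ 𝒜) * P a = 0) :
    Module.finrank ℂ M ≤ c :=
  hereditary_coloring_needs_dim_colors_general M 𝒜 h𝒜nz h𝒜her c P hadj hidem hsum hcomm hperp
end

section
/- Let m ≥ 1 and let n_r, k_r ≥ 1 for 1 ≤ r ≤ m, with n = Σ_r n_r k_r; identify ℂ^n with the direct sum over r of ℂ^{n_r} ⊗ ℂ^{k_r} and let M ⊆ M_n(ℂ) be the block-diagonal algebra whose r-th block is ℂ I_{n_r} ⊗ M_{k_r}(ℂ), so that M' has r-th block M_{n_r}(ℂ) ⊗ ℂ I_{k_r} and D := dim_ℂ M = Σ_r k_r². Let 𝒜 be a nonzero hereditary unital *-algebra over ℂ, and let P_1, …, P_D ∈ M_n(𝒜) be self-adjoint idempotents with P_a P_b = 0 for a ≠ b and Σ_a P_a = I_n ⊗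 1_𝒜, each commuting with Y ⊗ 1_𝒜 for all Y ∈ M', and satisfying P_a (X ⊗ 1_𝒜) P_a = 0 for every X ∈ M_n(ℂ) with Tr(Y* X) = 0 for all Y ∈ M'. Then for every a, Σ_{r=1}^m (k_r / (n_r D)) · (sum of the diagonal entries of P_a lying in the r-th block) = (1/D) · 1_𝒜; that is, (ψ_M ⊗ id_𝒜)(P_a) = (1/D) 1_𝒜, where ψ_M = ⊕_r (k_r/(n_r D)) Tr_{n_r k_r} is the Plancherel trace of M. -/
/-!
Commuting with `M' ⊗ 1` forces `P_a = ⊕_r I_{n_r} ⊗ Q_{a,r}`. Sandwiching matrix units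
orthogonal to `M'` between two copies of `P_a` shows that the diagonal entries `d_{a,(r,p)}` of the
`Q_{a,r}` multiply to zero pairwise, and sandwiching `k_r E_{pp} - I_{k_r}` (inside one copy of
block `r`), together with `P_a² = P_a`, gives `k_r d² = d`. Hence
`T_a = ∑_{r,p} k_r d_{a,(r,p)}` is a self-adjoint idempotent with `∑_a T_a = D`, so
`∑_a (1 - T_a)* (1 - T_a) = ∑_a (1 - T_a) = 0` and heredity forces `T_a = 1`.
Finally `D (ψ_M ⊗ id)(P_a) = T_a`, since the blocks of `P_a` do not depend on the copy `x`.
-/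

open Matrix

set_option synthInstance.maxHeartbeats 400000
set_option maxHeartbeats 1000000

noncomputable section

/-- The index set of rows/columns for the block algebra
`M = ⊕_r ℂI_{n_r} ⊗ M_{k_r}`: the disjoint union over `r` of `{1,…,n_r} × {1,…,k_r}`. -/
abbrev BlockIdx (m : ℕ) (nr kr : Fin m → ℕ) : Type :=
  (r : Fin m) × (Fin (nr r) × Fin (kr r))

/-- Membership in the commutant `M' = ⊕_r M_{n_r} ⊗ ℂI_{k_r}` of the block algebra
`M = ⊕_r ℂI_{n_r} ⊗ M_{k_r}`: `Y ∈ M'` iff there are matrices `B_r ∈ M_{n_r}(ℂ)` with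
`Y⟨r,(x,p)⟩⟨s,(y,q)⟩ = δ_{rs} δ_{pq} (B_r)_{xy}`. -/
def InBlockCommutant {m : ℕ} {nr kr : Fin m → ℕ}
    (Y : Matrix (BlockIdx m nr kr) (BlockIdx m nr kr) ℂ) : Prop :=
  ∃ B : (r : Fin m) → Matrix (Fin (nr r)) (Fin (nr r)) ℂ,
    ∀ (r s : Fin m) (x : Fin (nr r)) (p : Fin (kr r)) (y : Fin (nr s)) (q : Fin (kr s)),
      Y ⟨r, (x, p)⟩ ⟨s, (y, q)⟩ =
        if h : r = s then (if h ▸ p = q then B s (h ▸ x) y else 0) else 0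

def IsHereditary (R : Type*) [AddCommMonoid R] [Mul R] [Star R] : Prop :=
  ∀ (N : ℕ) (x : Fin N → R), ∑ i, star (x i) * x i = 0 → ∀ i, x i = 0

lemma isIdempotentElem_sum_nsmul {R Z : Type*} [NonUnitalSemiring R] [Fintype Z]
    (w : Z → ℕ) (d : Z → R) (hsq : ∀ z, w z • (d z * d z) = d z)
    (horth : Pairwise fun z z' => d z * d z' = 0) :
    IsIdempotentElem (∑ z, w z • d z) := by
  classical
  rw [IsIdempotentElem, Finset.sum_mul_sum]
  refine Finset.sum_congr rfl fun z _ => ?_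
  rw [Fintype.sum_eq_single z fun z' hz' => by
    rw [smul_mul_smul_comm, horth hz'.symm, smul_zero], smul_mul_smul_comm, mul_smul, hsq]

lemma IsHereditary.eq_one_of_sum_eq {R : Type*} [Ring R] [StarRing R] (hR : IsHereditary R)
    {N : ℕ} (T : Fin N → R) (hT : ∀ a, IsStarProjection (T a)) (hsum : ∑ a, T a = N)
    (a : Fin N) : T a = 1 := by
  have hdefect : ∀ a, star (1 - T a) * (1 - T a) = 1 - T a := fun a => by
    rw [star_sub, star_one, (hT a).isSelfAdjoint.star_eq, one_sub_mul, mul_one_sub,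
      (hT a).isIdempotentElem.eq]
    abel
  have hzero := hR N (fun a => 1 - T a) (by
    rw [Finset.sum_congr rfl fun a _ => hdefect a, Finset.sum_sub_distrib, hsum, Finset.sum_const,
      Finset.card_univ, Fintype.card_fin, nsmul_one, sub_self])
  exact (sub_eq_zero.mp (hzero a)).symm

lemma IsHereditary.sum_nsmul_eq_one {R Z : Type*} [Ring R] [StarRing R] [Fintype Z]
    (hR : IsHereditary R) {N : ℕ} (w : Z → ℕ) (hw : ∑ z, w z = N) (d : Fin N → Z → R)
    (hself : ∀ a z, IsSelfAdjoint (d a z)) (hsq : ∀ a z, w z • (d a z * d a z) = d a z)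
    (horth : ∀ a, Pairwise fun z z' => d a z * d a z' = 0) (hsum : ∀ z, ∑ a, d a z = 1)
    (a : Fin N) : ∑ z, w z • d a z = 1 := by
  refine hR.eq_one_of_sum_eq (fun a => ∑ z, w z • d a z) (fun a => ⟨?_, ?_⟩) ?_ a
  · exact isIdempotentElem_sum_nsmul w (d a) (hsq a) (horth a)
  · exact isSelfAdjoint_sum _ fun z _ => by rw [IsSelfAdjoint, star_nsmul, (hself a z).star_eq]
  · rw [Finset.sum_comm]
    simp only [← Finset.smul_sum, hsum, nsmul_one]
    rw [← Nat.cast_sum, hw]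

namespace Matrix

variable {ι κ α : Type*} [DecidableEq ι] [Fintype κ]

lemma map_sum_single_one {β : Type*} [Semiring α] [Semiring β] (φ : α →+* β)
    (f g : κ → ι) :
    (∑ q, single (f q) (g q) (1 : α)).map φ = ∑ q, single (f q) (g q) 1 := by
  ext i j
  simp [sum_apply, single_apply]

variable [Fintype ι]

section SumSingle

variable [NonAssocSemiring α] {f g : κ → ι} (A : Matrix ι ι α)

lemma sum_single_one_mul_apply_of_injective (hf : f.Injective) (p : κ) (j : ι) :
    ((∑ q, single (f q) (g q) (1 : α)) * A) (f p) j = A (g p) j := by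
  rw [Finset.sum_mul, sum_apply, Fintype.sum_eq_single p fun q hq =>
    single_mul_apply_of_ne _ _ _ _ _ (hf.ne hq.symm) _, single_mul_apply_same, one_mul]

lemma sum_single_one_mul_apply_of_notMem_range {i : ι} (hi : i ∉ Set.range f) (j : ι) :
    ((∑ q, single (f q) (g q) (1 : α)) * A) i j = 0 := by
  rw [Finset.sum_mul, sum_apply]
  exact Finset.sum_eq_zero fun q _ =>
    single_mul_apply_of_ne _ _ _ _ _ (fun h => hi ⟨q, h.symm⟩) _

lemma mul_sum_single_one_apply_of_injective (hg : g.Injective) (i : ι) (p : κ) :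
    (A * ∑ q, single (f q) (g q) (1 : α)) i (g p) = A i (f p) := by
  rw [Finset.mul_sum, sum_apply, Fintype.sum_eq_single p fun q hq =>
    mul_single_apply_of_ne _ _ _ _ _ (hg.ne hq.symm) _, mul_single_apply_same, mul_one]

end SumSingle

lemma mul_single_one_mul_apply_s15 [Semiring α] (A : Matrix ι ι α) (i j u v : ι) :
    (A * single i j (1 : α) * A) u v = A u i * A j v := by
  rw [mul_apply, Fintype.sum_eq_single j fun l hl => by rw [mul_single_apply_of_ne _ _ _ _ _ hl,
    zero_mul], mul_single_apply_same, mul_one]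

end Matrix

section BlockAlgebra

variable {m : ℕ} {nr kr : Fin m → ℕ} {𝒜 : Type*} [Ring 𝒜] [Algebra ℂ 𝒜]
  {P : Matrix (BlockIdx m nr kr) (BlockIdx m nr kr) 𝒜}

/-- `E_{xy} ⊗ I_{k_r}` in the `r`-th block; these matrix units span `M'`. -/
def commutantUnit (α : Type*) [AddCommMonoid α] [One α] (r : Fin m) (x y : Fin (nr r)) :
    Matrix (BlockIdx m nr kr) (BlockIdx m nr kr) α :=
  ∑ p, single ⟨r, (x, p)⟩ ⟨r, (y, p)⟩ 1

lemma inBlockCommutant_commutantUnit (r : Fin m) (x y : Fin (nr r)) :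
    InBlockCommutant (commutantUnit (kr := kr) ℂ r x y) := by
  refine ⟨Pi.single r (single x y 1), fun r' s x' p' y' q' => ?_⟩
  rw [commutantUnit, Matrix.sum_apply]
  by_cases hrs : r' = s
  · subst hrs
    by_cases hr : r = r'
    · subst hr
      simp only [dite_true, Pi.single_eq_same, single_apply, Sigma.mk.inj_iff, heq_eq_eq,
        Prod.mk.injEq, true_and]
      by_cases hpq : p' = q'
      · subst hpq
        rw [Fintype.sum_eq_single p' fun p hp => if_neg fun h => hp h.1.2]
        simp
      · simp [hpq]
    · rw [dif_pos rfl, Pi.single_eq_of_ne' hr, Matrix.zero_apply, ite_self]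
      refine Finset.sum_eq_zero fun p _ => if_neg ?_
      rintro ⟨h1, -⟩
      cases h1
      exact hr rfl
  · rw [dif_neg hrs]
    refine Finset.sum_eq_zero fun p _ => if_neg ?_
    rintro ⟨h1, h2⟩
    cases h1
    cases h2
    exact hrs rfl

lemma InBlockCommutant.apply_eq_zero {Y : Matrix (BlockIdx m nr kr) (BlockIdx m nr kr) ℂ}
    (hY : InBlockCommutant Y) {z z' : (r : Fin m) × Fin (kr r)} (hzz' : z ≠ z')
    (x : Fin (nr z.1)) (y : Fin (nr z'.1)) : Y ⟨z.1, (x, z.2)⟩ ⟨z'.1, (y, z'.2)⟩ = 0 := by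
  obtain ⟨B, hB⟩ := hY
  obtain ⟨r, p⟩ := z
  obtain ⟨s, q⟩ := z'
  rw [hB]
  by_cases hrs : r = s
  · subst hrs
    simp only [dite_true]
    exact if_neg fun h => hzz' (by rw [h])
  · exact dif_neg hrs

lemma InBlockCommutant.apply_diag_eq {Y : Matrix (BlockIdx m nr kr) (BlockIdx m nr kr) ℂ}
    (hY : InBlockCommutant Y) (r : Fin m) (x : Fin (nr r)) (p q : Fin (kr r)) :
    Y ⟨r, (x, p)⟩ ⟨r, (x, p)⟩ = Y ⟨r, (x, q)⟩ ⟨r, (x, q)⟩ := by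
  obtain ⟨B, hB⟩ := hY
  simp [hB]

/-- `P ∈ M ⊗ 𝒜`, expressed through the bicommutant theorem `M = M''`. -/
def InBlockAlgebra (P : Matrix (BlockIdx m nr kr) (BlockIdx m nr kr) 𝒜) : Prop :=
  ∀ Y, InBlockCommutant Y → P * Y.map (algebraMap ℂ 𝒜) = Y.map (algebraMap ℂ 𝒜) * P

lemma blockIdx_mk_injective (r : Fin m) (x : Fin (nr r)) :
    Function.Injective fun p : Fin (kr r) => (⟨r, (x, p)⟩ : BlockIdx m nr kr) :=
  sigma_mk_injective.comp (Prod.mk_right_injective x)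

namespace InBlockAlgebra

lemma commute_commutantUnit (hP : InBlockAlgebra P) (r : Fin m) (x y : Fin (nr r)) :
    P * commutantUnit 𝒜 r x y = commutantUnit 𝒜 r x y * P := by
  simpa only [commutantUnit, map_sum_single_one] using
    hP _ (inBlockCommutant_commutantUnit r x y)

lemma apply_eq_zero_of_notMem_fiber (hP : InBlockAlgebra P) {i : BlockIdx m nr kr} {s : Fin m}
    {y : Fin (nr s)} (hi : ∀ q, i ≠ ⟨s, (y, q)⟩) (q : Fin (kr s)) :
    P i ⟨s, (y, q)⟩ = 0 := by
  calc P i ⟨s, (y, q)⟩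
      = (P * commutantUnit 𝒜 s y y : Matrix _ _ 𝒜) i ⟨s, (y, q)⟩ :=
        (mul_sum_single_one_apply_of_injective P (f := fun t => ⟨s, (y, t)⟩)
          (blockIdx_mk_injective s y) i q).symm
    _ = (commutantUnit 𝒜 s y y * P : Matrix _ _ 𝒜) i ⟨s, (y, q)⟩ := by
        rw [hP.commute_commutantUnit]
    _ = 0 := sum_single_one_mul_apply_of_notMem_range _ (fun ⟨q, hq⟩ => hi q hq.symm) _

lemma apply_fiber_eq (hP : InBlockAlgebra P) (r : Fin m) (x y : Fin (nr r))
    (p q : Fin (kr r)) :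
    P ⟨r, (x, p)⟩ ⟨r, (x, q)⟩ = P ⟨r, (y, p)⟩ ⟨r, (y, q)⟩ := by
  calc P ⟨r, (x, p)⟩ ⟨r, (x, q)⟩
      = (P * commutantUnit 𝒜 r x y : Matrix _ _ 𝒜) ⟨r, (x, p)⟩ ⟨r, (y, q)⟩ :=
        (mul_sum_single_one_apply_of_injective P (f := fun t => ⟨r, (x, t)⟩)
          (blockIdx_mk_injective r y) _ q).symm
    _ = (commutantUnit 𝒜 r x y * P : Matrix _ _ 𝒜) ⟨r, (x, p)⟩ ⟨r, (y, q)⟩ := by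
        rw [hP.commute_commutantUnit]
    _ = P ⟨r, (y, p)⟩ ⟨r, (y, q)⟩ :=
        sum_single_one_mul_apply_of_injective _ (blockIdx_mk_injective r x) p _

lemma mul_apply_fiber (hP : InBlockAlgebra P)
    (A : Matrix (BlockIdx m nr kr) (BlockIdx m nr kr) 𝒜) (i : BlockIdx m nr kr) (r : Fin m)
    (x : Fin (nr r)) (q : Fin (kr r)) :
    (A * P) i ⟨r, (x, q)⟩ = ∑ t, A i ⟨r, (x, t)⟩ * P ⟨r, (x, t)⟩ ⟨r, (x, q)⟩ := by
  refine (Fintype.sum_of_injective _ (blockIdx_mk_injective r x) _ _ (fun k hk => ?_)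
    fun _ => rfl).symm
  dsimp only
  rw [hP.apply_eq_zero_of_notMem_fiber (fun t h => hk ⟨t, h.symm⟩), mul_zero]

end InBlockAlgebra

def OrthogonalToBlockCommutant (X : Matrix (BlockIdx m nr kr) (BlockIdx m nr kr) ℂ) : Prop :=
  ∀ Y, InBlockCommutant Y → (Yᴴ * X).trace = 0

lemma orthogonalToBlockCommutant_single {i j : BlockIdx m nr kr}
    (h : ∀ Y, InBlockCommutant Y → Y i j = 0) (c : ℂ) :
    OrthogonalToBlockCommutant (single i j c) := fun Y hY => by
  rw [trace_mul_single, conjTranspose_apply, h Y hY, star_zero, smul_zero]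

lemma orthogonalToBlockCommutant_sum_single_sub (r : Fin m) (x : Fin (nr r)) (p : Fin (kr r)) :
    OrthogonalToBlockCommutant (∑ t, (single (⟨r, (x, p)⟩ : BlockIdx m nr kr) ⟨r, (x, p)⟩
      (1 : ℂ) - single ⟨r, (x, t)⟩ ⟨r, (x, t)⟩ 1)) := fun Y hY => by
  rw [Matrix.mul_sum, trace_sum]
  refine Finset.sum_eq_zero fun t _ => ?_
  rw [Matrix.mul_sub, trace_sub, trace_mul_single, trace_mul_single, conjTranspose_apply,
    conjTranspose_apply, hY.apply_diag_eq r x p t, sub_self]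

lemma diag_mul_diag_eq_zero_of_ne
    (hP : ∀ X, OrthogonalToBlockCommutant X → P * X.map (algebraMap ℂ 𝒜) * P = 0)
    {z z' : (r : Fin m) × Fin (kr r)} (hzz' : z ≠ z') (x : Fin (nr z.1)) (y : Fin (nr z'.1)) :
    P ⟨z.1, (x, z.2)⟩ ⟨z.1, (x, z.2)⟩ * P ⟨z'.1, (y, z'.2)⟩ ⟨z'.1, (y, z'.2)⟩ =
      0 := by
  have h := congr_fun₂ (hP _ (orthogonalToBlockCommutant_single
    (fun Y hY => hY.apply_eq_zero hzz' x y) 1)) ⟨z.1, (x, z.2)⟩ ⟨z'.1, (y, z'.2)⟩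
  rwa [map_single, map_one, mul_single_one_mul_apply_s15] at h

lemma nsmul_diag_mul_self_eq_sum
    (hP : ∀ X, OrthogonalToBlockCommutant X → P * X.map (algebraMap ℂ 𝒜) * P = 0)
    (r : Fin m) (x : Fin (nr r)) (p : Fin (kr r)) :
    kr r • (P ⟨r, (x, p)⟩ ⟨r, (x, p)⟩ * P ⟨r, (x, p)⟩ ⟨r, (x, p)⟩) =
      ∑ t, P ⟨r, (x, p)⟩ ⟨r, (x, t)⟩ * P ⟨r, (x, t)⟩ ⟨r, (x, p)⟩ := by
  have h := congr_fun₂ (hP _ (orthogonalToBlockCommutant_sum_single_sub r x p))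
    ⟨r, (x, p)⟩ ⟨r, (x, p)⟩
  rw [← RingHom.mapMatrix_apply, map_sum, Matrix.mul_sum, Matrix.sum_mul, Matrix.sum_apply] at h
  simp_rw [map_sub, RingHom.mapMatrix_apply, map_single, map_one, Matrix.mul_sub, Matrix.sub_mul,
    Matrix.sub_apply, mul_single_one_mul_apply_s15] at h
  rwa [Finset.sum_sub_distrib, Finset.sum_const, Finset.card_univ, Fintype.card_fin,
    Matrix.zero_apply, sub_eq_zero] at h

lemma InBlockAlgebra.nsmul_diag_mul_self_eq_diag (hP : InBlockAlgebra P)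
    (hperp : ∀ X, OrthogonalToBlockCommutant X → P * X.map (algebraMap ℂ 𝒜) * P = 0)
    (hidem : IsIdempotentElem P) (r : Fin m) (x : Fin (nr r)) (p : Fin (kr r)) :
    kr r • (P ⟨r, (x, p)⟩ ⟨r, (x, p)⟩ * P ⟨r, (x, p)⟩ ⟨r, (x, p)⟩) =
      P ⟨r, (x, p)⟩ ⟨r, (x, p)⟩ := by
  rw [nsmul_diag_mul_self_eq_sum hperp, ← hP.mul_apply_fiber, hidem.eq]

lemma sum_div_smul_sum_diag_eq (A : Matrix (BlockIdx m nr kr) (BlockIdx m nr kr) 𝒜)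
    (hA : ∀ r (x y : Fin (nr r)) p,
      A ⟨r, (x, p)⟩ ⟨r, (x, p)⟩ = A ⟨r, (y, p)⟩ ⟨r, (y, p)⟩)
    (x₀ : ∀ r, Fin (nr r)) (c : ℂ) :
    ∑ r, ((kr r : ℂ) / ((nr r : ℂ) * c)) • ∑ x, ∑ p, A ⟨r, (x, p)⟩ ⟨r, (x, p)⟩ =
      c⁻¹ • ∑ z : (r : Fin m) × Fin (kr r),
        kr z.1 • A ⟨z.1, (x₀ z.1, z.2)⟩ ⟨z.1, (x₀ z.1, z.2)⟩ := by
  rw [← Finset.univ_sigma_univ, Finset.sum_sigma, Finset.smul_sum]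
  refine Finset.sum_congr rfl fun r _ => ?_
  dsimp only
  have hn : (nr r : ℂ) ≠ 0 := Nat.cast_ne_zero.mpr (x₀ r).pos.ne'
  rw [Finset.sum_congr rfl fun x _ => Finset.sum_congr rfl fun p _ => hA r x (x₀ r) p,
    Finset.sum_const, Finset.card_univ, Fintype.card_fin, ← Finset.smul_sum,
    ← Nat.cast_smul_eq_nsmul ℂ, ← Nat.cast_smul_eq_nsmul ℂ, smul_smul, smul_smul,
    mul_comm (nr r : ℂ), ← div_div, div_mul_cancel₀ _ hn, div_eq_inv_mul]

end BlockAlgebra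

theorem minimal_hereditary_coloring_trace_general (m : ℕ)
    (nr kr : Fin m → ℕ) (hnr : ∀ r, 1 ≤ nr r)
    (𝒜 : Type*) [Ring 𝒜] [Algebra ℂ 𝒜] [StarRing 𝒜]
    (h𝒜her : ∀ (N : ℕ) (x : Fin N → 𝒜), ∑ i, star (x i) * x i = 0 → ∀ i, x i = 0)
    (D : ℕ) (hD : D = ∑ r, (kr r) ^ 2)
    (P : Fin D → Matrix (BlockIdx m nr kr) (BlockIdx m nr kr) 𝒜)
    (hadj : ∀ a, (P a)ᴴ = P a)
    (hidem : ∀ a, P a * P a = P a)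
    (hsum : ∑ a, P a = 1)
    (hcomm : ∀ (a : Fin D) (Y : Matrix (BlockIdx m nr kr) (BlockIdx m nr kr) ℂ),
      InBlockCommutant Y →
      P a * Y.map (algebraMap ℂ 𝒜) = Y.map (algebraMap ℂ 𝒜) * P a)
    (hperp : ∀ (a : Fin D) (X : Matrix (BlockIdx m nr kr) (BlockIdx m nr kr) ℂ),
      (∀ Y, InBlockCommutant Y → (Yᴴ * X).trace = 0) →
      P a * X.map (algebraMap ℂ 𝒜) * P a = 0) :
    ∀ a : Fin D,
      ∑ r : Fin m, ((kr r : ℂ) / ((nr r : ℂ) * (D : ℂ))) •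
        (∑ x : Fin (nr r), ∑ p : Fin (kr r), P a ⟨r, (x, p)⟩ ⟨r, (x, p)⟩)
      = ((D : ℂ))⁻¹ • (1 : 𝒜) := by
  intro a
  have hP : ∀ a, InBlockAlgebra (P a) := hcomm
  let x₀ : ∀ r, Fin (nr r) := fun r => ⟨0, hnr r⟩
  have hw : ∑ z : (r : Fin m) × Fin (kr r), kr z.1 = D := by
    rw [← Finset.univ_sigma_univ, Finset.sum_sigma, hD]
    simp [sq]
  have hdiag_sum := IsHereditary.sum_nsmul_eq_one h𝒜her
    (fun z : (r : Fin m) × Fin (kr r) => kr z.1) hw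
    (fun a z => P a ⟨z.1, (x₀ z.1, z.2)⟩ ⟨z.1, (x₀ z.1, z.2)⟩)
    (fun a _ => IsHermitian.apply (hadj a) _ _)
    (fun a _ => (hP a).nsmul_diag_mul_self_eq_diag (hperp a) (hidem a) _ _ _)
    (fun a _ _ hzz' => diag_mul_diag_eq_zero_of_ne (hperp a) hzz' _ _)
    (fun _ => by rw [← Matrix.sum_apply, hsum, one_apply_eq]) a
  rw [sum_div_smul_sum_diag_eq (P a) (fun r x y p => (hP a).apply_fiber_eq r x y p p) x₀,
    hdiag_sum]

/-- **Theorem (rigidity of minimal hereditary colorings).**  Let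
`M = ⊕_r ℂ I_{n_r} ⊗ M_{k_r} ⊆ M_n(ℂ)` (so `M'` has `r`-th block `M_{n_r} ⊗ ℂ I_{k_r}` and
`D = dim_ℂ M = ∑_r k_r²`), let `𝒜` be a nonzero hereditary unital *-algebra over `ℂ`, and let
`P_1, …, P_D ∈ M ⊗ 𝒜` be a hereditary `D`-coloring of the complete quantum graph
`(M_n, M, M_n)`.  Then for every `a`,
`(ψ_M ⊗ id_𝒜)(P_a) = ∑_r (k_r/(n_r D)) · (∑ diagonal entries of `P_a` in block r) = (1/D)·1_𝒜`,
where `ψ_M` is the Plancherel trace of `M`. -/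
theorem minimal_hereditary_coloring_trace (m : ℕ) (hm : 1 ≤ m)
    (nr kr : Fin m → ℕ) (hnr : ∀ r, 1 ≤ nr r) (hkr : ∀ r, 1 ≤ kr r)
    (𝒜 : Type*) [Ring 𝒜] [Algebra ℂ 𝒜] [StarRing 𝒜] [StarModule ℂ 𝒜]
    (h𝒜nz : (1 : 𝒜) ≠ 0)
    (h𝒜her : ∀ (N : ℕ) (x : Fin N → 𝒜), ∑ i, star (x i) * x i = 0 → ∀ i, x i = 0)
    (D : ℕ) (hD : D = ∑ r, (kr r) ^ 2)
    (P : Fin D → Matrix (BlockIdx m nr kr) (BlockIdx m nr kr) 𝒜)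
    (hadj : ∀ a, (P a)ᴴ = P a)
    (hidem : ∀ a, P a * P a = P a)
    (horth : ∀ a b, a ≠ b → P a * P b = 0)
    (hsum : ∑ a, P a = 1)
    (hcomm : ∀ (a : Fin D) (Y : Matrix (BlockIdx m nr kr) (BlockIdx m nr kr) ℂ),
      InBlockCommutant Y →
      P a * Y.map (algebraMap ℂ 𝒜) = Y.map (algebraMap ℂ 𝒜) * P a)
    (hperp : ∀ (a : Fin D) (X : Matrix (BlockIdx m nr kr) (BlockIdx m nr kr) ℂ),
      (∀ Y, InBlockCommutant Y → (Yᴴ * X).trace = 0) →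
      P a * X.map (algebraMap ℂ 𝒜) * P a = 0) :
    ∀ a : Fin D,
      ∑ r : Fin m, ((kr r : ℂ) / ((nr r : ℂ) * (D : ℂ))) •
        (∑ x : Fin (nr r), ∑ p : Fin (kr r), P a ⟨r, (x, p)⟩ ⟨r, (x, p)⟩)
      = ((D : ℂ))⁻¹ • (1 : 𝒜) :=
  minimal_hereditary_coloring_trace_general m nr kr hnr 𝒜 h𝒜her D hD P hadj hidem hsum hcomm hperp
end
end

section
/- Let M ⊆ M_n(ℂ) be a unital *-subalgebra with commutant M'. Then M is commutative if and only if there exist an integer c ≥ 1 and matrices P_1, …, P_c ∈ M_n(ℂ) such that: each P_a belongs to M, each P_a is a self-adjoint idempotent, P_a P_b = 0 for a ≠ b, Σ_{a=1}^c P_a = I_n, P_a X P_a = 0 for every X ∈ M_n(ℂ) with Tr(Y* X) = 0 for all Y ∈ M', and P_a Y P_b = 0 for every Y ∈ M' and all a ≠ b. (Equivalently: the local chromatic number χ_loc((M_n, M, M_n)) of the complete quantum graph is finite if and only if M is abelian.) -/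
/-!
If `M` is commutative, `1` splits into minimal projections `P_a` of `M`: a projection `e ∈ M`
whose corner `e M e` is not `ℂ e` is split by a spectral projection of a self-adjoint element of
`e M e`, and the rank drops. Since `P_a A = A P_a ∈ ℂ P_a` for `A ∈ M`, every compression
`W = P_a X P_a` lies in `M'`, so `X ⊥ M'` gives `Tr (W* W) = Tr (W* X) = 0`.

Conversely, the trace form `(Y, X) ↦ Tr (Y X)` is nondegenerate, so `M'` is its own double
orthogonal. As `M'` is closed under `*`, the hypothesis says that `Tr (Z P_a X P_a) = 0` for all
`X` and all `Z` orthogonal to `M'` for this form, which puts every compression `P_a X P_a` into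
`M'`. Thus each `P_a` lies in `M'`, and so does every `x = ∑ P_a x P_a` in `M`.
-/

open Matrix

section ScalarCorner

variable {A : Type*} [Ring A] [StarRing A] [Algebra ℂ A] [StarModule ℂ A]

/-- For a nonzero star projection `p ∈ S`, this says that `p` is a minimal projection of `S`. -/
def HasScalarCorner (S : StarSubalgebra ℂ A) (p : A) : Prop :=
  ∀ a ∈ S, ∃ μ : ℂ, p * a * p = μ • p

theorem hasScalarCorner_of_isSelfAdjoint {S : StarSubalgebra ℂ A} {p : A}
    (h : ∀ a ∈ S, IsSelfAdjoint a → ∃ μ : ℂ, p * a * p = μ • p) : HasScalarCorner S p := by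
  intro a ha
  have hre : (realPart a : A) ∈ S := by
    rw [realPart_apply_coe]
    exact S.smul_mem (add_mem ha (star_mem ha)) _
  have him : (imaginaryPart a : A) ∈ S := by
    rw [imaginaryPart_apply_coe]
    exact S.smul_mem (S.smul_mem (sub_mem ha (star_mem ha)) _) _
  obtain ⟨μ₁, h₁⟩ := h _ hre (realPart a).2
  obtain ⟨μ₂, h₂⟩ := h _ him (imaginaryPart a).2
  refine ⟨μ₁ + Complex.I * μ₂, ?_⟩
  rw [← realPart_add_I_smul_imaginaryPart a, mul_add, add_mul, mul_smul_comm, smul_mul_assoc,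
    h₁, h₂, smul_smul, add_smul]

structure IsAtomicDecomposition (S : StarSubalgebra ℂ A) {ι : Type*} [Fintype ι]
    (P : ι → A) (e : A) : Prop where
  mem : ∀ i, P i ∈ S
  isSelfAdjoint : ∀ i, IsSelfAdjoint (P i)
  orthogonalIdempotents : OrthogonalIdempotents P
  sum_eq : ∑ i, P i = e
  hasScalarCorner : ∀ i, HasScalarCorner S (P i)

namespace IsAtomicDecomposition

variable {S : StarSubalgebra ℂ A} {ι : Type*} [Fintype ι] {P : ι → A} {e : A}

theorem isStarProjection (h : IsAtomicDecomposition S P e) (i : ι) : IsStarProjection (P i) :=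
  ⟨h.orthogonalIdempotents.idem i, h.isSelfAdjoint i⟩

theorem isSelfAdjoint_sum (h : IsAtomicDecomposition S P e) : IsSelfAdjoint e :=
  h.sum_eq ▸ _root_.isSelfAdjoint_sum _ fun i _ => h.isSelfAdjoint i

theorem mul_right_eq (h : IsAtomicDecomposition S P e) (i : ι) : P i * e = P i := by
  rw [← h.sum_eq]
  exact h.orthogonalIdempotents.mul_sum_of_mem (Finset.mem_univ i)

theorem mul_left_eq (h : IsAtomicDecomposition S P e) (i : ι) : e * P i = P i := by
  simpa [(h.isSelfAdjoint i).star_eq, h.isSelfAdjoint_sum.star_eq] using congr(star $(h.mul_right_eq i))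

theorem of_hasScalarCorner (heS : e ∈ S) (he : IsStarProjection e) (hc : HasScalarCorner S e) :
    IsAtomicDecomposition S (fun _ : Fin 1 => e) e where
  mem _ := heS
  isSelfAdjoint _ := he.isSelfAdjoint
  orthogonalIdempotents := OrthogonalIdempotents.unique.2 he.isIdempotentElem
  sum_eq := by simp
  hasScalarCorner _ := hc

theorem comp_equiv {κ : Type*} [Fintype κ] (h : IsAtomicDecomposition S P e) (σ : κ ≃ ι) :
    IsAtomicDecomposition S (P ∘ σ) e where
  mem i := h.mem (σ i)
  isSelfAdjoint i := h.isSelfAdjoint (σ i)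
  orthogonalIdempotents := (OrthogonalIdempotents.equiv σ).2 h.orthogonalIdempotents
  sum_eq := by rw [← h.sum_eq]; exact σ.sum_comp P
  hasScalarCorner i := h.hasScalarCorner (σ i)

theorem sumElim {κ : Type*} [Fintype κ] {Q : κ → A} {f : A} (hP : IsAtomicDecomposition S P e)
    (hQ : IsAtomicDecomposition S Q f) (hef : e * f = 0) :
    IsAtomicDecomposition S (Sum.elim P Q) (e + f) where
  mem := Sum.rec hP.mem hQ.mem
  isSelfAdjoint := Sum.rec hP.isSelfAdjoint hQ.isSelfAdjoint
  orthogonalIdempotents := by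
    have hfe : f * e = 0 := by
      simpa [hP.isSelfAdjoint_sum.star_eq, hQ.isSelfAdjoint_sum.star_eq] using congr(star $hef)
    refine ⟨Sum.rec hP.orthogonalIdempotents.idem hQ.orthogonalIdempotents.idem, ?_⟩
    rintro (i | i) (j | j) hij
    · exact hP.orthogonalIdempotents.ortho (fun h => hij (congrArg _ h))
    · simp only [Sum.elim_inl, Sum.elim_inr]
      rw [← hP.mul_right_eq i, ← hQ.mul_left_eq j, mul_assoc, ← mul_assoc e, hef, zero_mul, mul_zero]
    · simp only [Sum.elim_inl, Sum.elim_inr]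
      rw [← hQ.mul_right_eq i, ← hP.mul_left_eq j, mul_assoc, ← mul_assoc f, hfe, zero_mul, mul_zero]
    · exact hQ.orthogonalIdempotents.ortho (fun h => hij (congrArg _ h))
  sum_eq := by simp only [Fintype.sum_sum_type, Sum.elim_inl, Sum.elim_inr, hP.sum_eq, hQ.sum_eq]
  hasScalarCorner := Sum.rec hP.hasScalarCorner hQ.hasScalarCorner

end IsAtomicDecomposition

theorem commute_compression_of_hasScalarCorner {S : StarSubalgebra ℂ A}
    (hS : ∀ x ∈ S, ∀ y ∈ S, x * y = y * x) {p : A} (hpS : p ∈ S) (hp : IsIdempotentElem p)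
    (hc : HasScalarCorner S p) (X : A) : ∀ a ∈ S, p * X * p * a = a * (p * X * p) := by
  intro a ha
  obtain ⟨μ, hμ⟩ := hc a ha
  have hpa : p * a = μ • p := by rw [← hμ, mul_assoc, hS a ha p hpS, ← mul_assoc, hp.eq]
  have hap : a * p = μ • p := hS a ha p hpS ▸ hpa
  rw [mul_assoc, hpa, ← mul_assoc a, ← mul_assoc a, hap, mul_smul_comm, smul_mul_assoc,
    smul_mul_assoc]

end ScalarCorner

namespace Matrix

variable {m : Type*} [Fintype m]

section TraceForm

variable {R K : Type*} [CommRing R] [Field K]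

variable (m R) in
def traceForm : LinearMap.BilinForm R (Matrix m m R) :=
  (LinearMap.mul R (Matrix m m R)).compr₂ (traceLinearMap m R R)

@[simp]
theorem traceForm_apply (Y X : Matrix m m R) : traceForm m R Y X = (Y * X).trace := rfl

theorem traceForm_isRefl : (traceForm m R).IsRefl := fun Y X h => by
  rwa [traceForm_apply, trace_mul_comm, ← traceForm_apply]

theorem traceForm_nondegenerate : (traceForm m R).Nondegenerate :=
  ⟨fun Y hY => ext_iff_trace_mul_right.2 fun X => by simpa using hY X,
    fun X hX => ext_iff_trace_mul_left.2 fun Y => by simpa using hX Y⟩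

theorem compression_mem_of_forall_mem_orthogonal {V : Submodule K (Matrix m m K)}
    {P : Matrix m m K} (hP : ∀ Z ∈ (traceForm m K).orthogonal V, P * Z * P = 0)
    (X : Matrix m m K) : P * X * P ∈ V := by
  rw [← LinearMap.BilinForm.orthogonal_orthogonal traceForm_nondegenerate traceForm_isRefl V]
  intro Z hZ
  calc traceForm m K Z (P * X * P) = (P * (Z * P * X)).trace := by
        rw [traceForm_apply, ← mul_assoc, trace_mul_comm, mul_assoc Z]
    _ = 0 := by rw [← mul_assoc, ← mul_assoc, hP Z hZ, zero_mul, trace_zero]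

end TraceForm

open scoped ComplexOrder in
theorem compression_eq_zero_of_trace_eq_zero {𝕜 : Type*} [RCLike 𝕜] {p X : Matrix m m 𝕜}
    (hp : IsStarProjection p) (h : ((p * X * p)ᴴ * X).trace = 0) : p * X * p = 0 := by
  have hpp := hp.isIdempotentElem.eq
  have hW : (p * X * p)ᴴ = p * Xᴴ * p := by
    have hpH : pᴴ = p := hp.isSelfAdjoint
    simp only [conjTranspose_mul, hpH, mul_assoc]
  rw [← trace_conjTranspose_mul_self_eq_zero_iff, ← h, hW]
  calc (p * Xᴴ * p * (p * X * p)).trace = (p * Xᴴ * (p * p) * X * p).trace := by noncomm_ring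
    _ = (p * (p * Xᴴ * p * X)).trace := by rw [hpp, trace_mul_comm]
    _ = (p * Xᴴ * p * X).trace := by rw [← mul_assoc, ← mul_assoc, ← mul_assoc, hpp]

variable [DecidableEq m]

theorem commute_of_forall_compression_eq_zero {K : Type*} [Field K] (s : Set (Matrix m m K))
    {ι : Type*} [Fintype ι]
    (P : ι → Matrix m m K) (hP : ∀ i, IsIdempotentElem (P i)) (hsum : ∑ i, P i = 1)
    (hvanish : ∀ i, ∀ Z ∈ (traceForm m K).orthogonal (Subalgebra.centralizer K s).toSubmodule,
      P i * Z * P i = 0) :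
    ∀ x ∈ s, ∀ y ∈ s, x * y = y * x := by
  have hcomp (i : ι) (X : Matrix m m K) : P i * X * P i ∈ Subalgebra.centralizer K s :=
    compression_mem_of_forall_mem_orthogonal (hvanish i) X
  have hPc (i : ι) : P i ∈ Subalgebra.centralizer K s := by
    simpa [(hP i).eq] using hcomp i 1
  intro x hx y hy
  have hxP (i : ι) : x * P i = P i * x * P i := by
    rw [← (Subalgebra.mem_centralizer_iff K).1 (hPc i) x hx, mul_assoc, (hP i).eq]
  have hxc : x ∈ Subalgebra.centralizer K s := by
    rw [← mul_one x, ← hsum, Finset.mul_sum]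
    simp only [hxP]
    exact sum_mem fun i _ => hcomp i x
  exact ((Subalgebra.mem_centralizer_iff K).1 hxc y hy).symm

theorem rank_eq_trace_of_isIdempotentElem {K : Type*} [Field K] {e : Matrix m m K}
    (he : IsIdempotentElem e) : (e.rank : K) = e.trace := by
  have he' : IsIdempotentElem (toLin' e) := he.map toLinAlgEquiv'
  rw [← trace_toLin'_eq, (LinearMap.IsIdempotentElem.isProj_range _ he').trace]
  rfl

theorem rank_lt_rank_add {K : Type*} [Field K] [CharZero K] {p f : Matrix m m K}
    (hp : IsIdempotentElem p) (hf : IsIdempotentElem f) (hpf : IsIdempotentElem (p + f))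
    (hf0 : f ≠ 0) : p.rank < (p + f).rank := by
  have hsum : (p + f).rank = p.rank + f.rank := by
    exact_mod_cast (show ((p + f).rank : K) = p.rank + f.rank by
      simp only [rank_eq_trace_of_isIdempotentElem, hp, hf, hpf, trace_add])
  have hf_rank : f.rank ≠ 0 := by
    intro h
    rw [rank, Submodule.finrank_eq_zero, LinearMap.range_eq_bot] at h
    exact hf0 (toLin'.injective (h.trans (map_zero _).symm))
  omega

theorem exists_isStarProjection_of_ne_smul (S : StarSubalgebra ℂ (Matrix m m ℂ))
    {a e : Matrix m m ℂ} (haS : a ∈ S) (ha : IsSelfAdjoint a) (hea : e * a = a)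
    (hae : a * e = a) (hne : ∀ μ : ℂ, a ≠ μ • e) :
    ∃ p ∈ S, IsStarProjection p ∧ e * p = p ∧ p ≠ 0 ∧ p ≠ e := by
  obtain ⟨t, ht, ht0⟩ : ∃ t ∈ spectrum ℝ a, t ≠ 0 := by
    by_contra! h
    exact hne 0 (by rw [zero_smul]; exact CFC.eq_zero_of_spectrum_subset_zero (R := ℝ) a h)
  have hcont (f : ℝ → ℝ) : ContinuousOn f (spectrum ℝ a) :=
    a.finite_real_spectrum.continuousOn f
  have : IsClosed (S : Set (Matrix m m ℂ)) :=
    S.toSubalgebra.toSubmodule.closed_of_finiteDimensional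
  -- `p` is the spectral projection of `a` for `t ≠ 0`; `p = t⁻¹ • a * p` then gives `e * p = p`.
  set f : ℝ → ℝ := fun x => if x = t then 1 else 0
  set p := cfc f a
  have hap : a * p = (t : ℂ) • p := by
    calc a * p = cfc (fun x => x * f x) a := by
          rw [cfc_mul _ _ a (hcont _) (hcont _), cfc_id' ℝ a]
      _ = cfc (fun x => t * f x) a := cfc_congr fun x _ => by by_cases h : x = t <;> simp [f, h]
      _ = (t : ℂ) • p := by rw [cfc_const_mul t f a (hcont f), ← Complex.coe_smul]
  have hpp : p * p = p := by
    rw [← cfc_mul f f a (hcont f) (hcont f)]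
    exact cfc_congr fun x _ => by by_cases h : x = t <;> simp [f, h]
  refine ⟨p, cfc_mem f haS, ⟨hpp, cfc_predicate f a⟩, ?_, ?_, ?_⟩
  · have hp : p = (t : ℂ)⁻¹ • (a * p) := by
      rw [hap, smul_smul, inv_mul_cancel₀ (by exact_mod_cast ht0), one_smul]
    rw [hp, mul_smul_comm, ← mul_assoc, hea]
  · intro h
    have := eqOn_of_cfc_eq_cfc (h.trans (cfc_zero ℝ a).symm) (hcont f) (hcont 0) ha ht
    simp [f] at this
  · rintro rfl
    exact hne t (by rw [← hap, hae])

theorem exists_isStarProjection_of_not_hasScalarCorner {S : StarSubalgebra ℂ (Matrix m m ℂ)}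
    {e : Matrix m m ℂ} (heS : e ∈ S) (he : IsStarProjection e) (hc : ¬ HasScalarCorner S e) :
    ∃ p ∈ S, IsStarProjection p ∧ e * p = p ∧ p ≠ 0 ∧ p ≠ e := by
  obtain ⟨a, haS, ha, hne⟩ : ∃ a ∈ S, IsSelfAdjoint a ∧ ∀ μ : ℂ, e * a * e ≠ μ • e := by
    by_contra! h
    exact hc (hasScalarCorner_of_isSelfAdjoint h)
  have he2 := he.isIdempotentElem.eq
  refine exists_isStarProjection_of_ne_smul S (mul_mem (mul_mem heS haS) heS)
    (ha.conjugate_self he.isSelfAdjoint) ?_ ?_ hne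
  · rw [← mul_assoc, ← mul_assoc, he2]
  · rw [mul_assoc, he2]

theorem exists_isAtomicDecomposition (S : StarSubalgebra ℂ (Matrix m m ℂ)) {e : Matrix m m ℂ}
    (heS : e ∈ S) (he : IsStarProjection e) :
    ∃ c, 0 < c ∧ ∃ P : Fin c → Matrix m m ℂ, IsAtomicDecomposition S P e := by
  induction hr : e.rank using Nat.strong_induction_on generalizing e with
  | _ r ih =>
  by_cases hc : HasScalarCorner S e
  · exact ⟨1, one_pos, _, .of_hasScalarCorner heS he hc⟩
  obtain ⟨p, hpS, hp, hep, hp0, hpe⟩ := exists_isStarProjection_of_not_hasScalarCorner heS he hc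
  have hf : IsStarProjection (e - p) := hp.sub_of_mul_eq_right he hep
  have hpe' : p * e = p := by
    simpa [hp.isSelfAdjoint.star_eq, he.isSelfAdjoint.star_eq] using congr(star $hep)
  have hpf : p * (e - p) = 0 := by rw [mul_sub, hpe', hp.isIdempotentElem.eq, sub_self]
  have hsum : p + (e - p) = e := add_sub_cancel p e
  have hrp : p.rank < r := by
    have := rank_lt_rank_add hp.isIdempotentElem hf.isIdempotentElem
      (by rw [hsum]; exact he.isIdempotentElem) (sub_ne_zero.2 hpe.symm)
    rwa [hsum, hr] at this
  have hrf : (e - p).rank < r := by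
    have := rank_lt_rank_add hf.isIdempotentElem hp.isIdempotentElem
      (by rw [sub_add_cancel]; exact he.isIdempotentElem) hp0
    rwa [sub_add_cancel, hr] at this
  obtain ⟨c₁, hc₁, P₁, h₁⟩ := ih _ hrp hpS hp rfl
  obtain ⟨c₂, -, P₂, h₂⟩ := ih _ hrf (sub_mem heS hpS) hf rfl
  exact ⟨c₁ + c₂, by omega, _, hsum ▸ (h₁.sumElim h₂ hpf).comp_equiv finSumFinEquiv.symm⟩

end Matrix

/-- **Theorem (local colorability of complete quantum graphs).**  Let `M ⊆ M_n(ℂ)` be a unital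
*-subalgebra with commutant `M'`.  Then `M` is commutative if and only if there exist `c ≥ 1`
and matrices `P_1, …, P_c ∈ M` which are mutually orthogonal self-adjoint idempotents summing
to `I_n`, with `P_a X P_a = 0` for every `X ⊥ M'` (Frobenius inner product) and
`P_a Y P_b = 0` for every `Y ∈ M'` and `a ≠ b`.  Equivalently, the local chromatic number
`χ_loc((M_n, M, M_n))` of the complete quantum graph is finite iff `M` is abelian. -/
theorem complete_quantum_graph_loc_colorable_iff_abelian {n : ℕ}
    (M : StarSubalgebra ℂ (Matrix (Fin n) (Fin n) ℂ)) :
    (∀ x ∈ M, ∀ y ∈ M, x * y = y * x) ↔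
    ∃ c : ℕ, 1 ≤ c ∧
      ∃ P : Fin c → Matrix (Fin n) (Fin n) ℂ,
        (∀ a, P a ∈ M) ∧
        (∀ a, (P a)ᴴ = P a) ∧
        (∀ a, P a * P a = P a) ∧
        (∀ a b, a ≠ b → P a * P b = 0) ∧
        (∑ a, P a = 1) ∧
        (∀ (a : Fin c) (X : Matrix (Fin n) (Fin n) ℂ),
          (∀ Y : Matrix (Fin n) (Fin n) ℂ, (∀ A ∈ M, Y * A = A * Y) → (Yᴴ * X).trace = 0) →
          P a * X * P a = 0) ∧
        (∀ a b, a ≠ b → ∀ Y : Matrix (Fin n) (Fin n) ℂ, (∀ A ∈ M, Y * A = A * Y) →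
          P a * Y * P b = 0) := by
  constructor
  · intro hcomm
    obtain ⟨c, hc, P, hP⟩ := exists_isAtomicDecomposition M (one_mem M) (.one _)
    refine ⟨c, hc, P, hP.mem, hP.isSelfAdjoint, hP.orthogonalIdempotents.idem,
      fun a b hab => hP.orthogonalIdempotents.ortho hab, hP.sum_eq, ?_, ?_⟩
    · intro a X hX
      exact compression_eq_zero_of_trace_eq_zero (hP.isStarProjection a) <| hX _ <|
        commute_compression_of_hasScalarCorner hcomm (hP.mem a)
          (hP.orthogonalIdempotents.idem a) (hP.hasScalarCorner a) X
    · intro a b hab Y hY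
      rw [← hY (P a) (hP.mem a), mul_assoc, hP.orthogonalIdempotents.ortho hab, mul_zero]
  · rintro ⟨c, -, P, -, -, hidem, -, hsum, hvanish, -⟩
    refine commute_of_forall_compression_eq_zero M P hidem hsum fun a Z hZ =>
      hvanish a Z fun Y hY => hZ _ ?_
    have hYc : Y ∈ Subalgebra.centralizer ℂ (M : Set (Matrix (Fin n) (Fin n) ℂ)) :=
      (Subalgebra.mem_centralizer_iff ℂ).2 fun A hA => (hY A hA).symm
    exact Set.star_mem_centralizer' (fun _ => star_mem) hYc
end
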